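/- arXiv:2405.04780 — 6 statements merged into one kernel-verified Lean document; each statement's English description precedes it below -/
import Mathlib

section
/- In a simplicial T-complex, composition of 1-simplices is associative: given three composable 1-simplices f, g, h, the composite (hg)f obtained by filling the thin 2-simplices for gf, hg, and then the thin filler of the Λ³₁-horn with faces the thin 2-simplices witnessing gf, hg, and (hg)f, yields (hg)f = h(gf). -/
open CategoryTheory Simplicial SSet Opposite

namespace Strict

/-- A simplex is degenerate if it is in the image of a degeneracy map. -/
def IsDegenerate (X : SSet) {n : ℕ} (x : X _⦋n + 1⦌) : Prop :=
  ∃ (i : Fin (n + 1)) (y : X _⦋n⦌), X.σ i y = x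

/-- `y` fills the horn `h : Λ[n+1, i] ⟶ X`, i.e. all its faces except possibly
the `i`-th one are the corresponding faces of the horn. -/
def Fills (X : SSet) {n : ℕ} {i : Fin (n + 2)} (h : (Λ[n + 1, i] : SSet) ⟶ X) (y : X _⦋n + 1⦌) : Prop :=
  ∀ (j : Fin (n + 2)) (hj : j ≠ i), X.δ j y = h.app (op ⦋n⦌) (horn.face i j hj)

/-- A simplicial T-complex structure (Dakin) on a simplicial set: a collection of
`thin` simplices in each positive dimension such that every degenerate simplex is thin,
every horn has a unique thin filler, and the thin filler of a horn all of whose faces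
are thin has a thin remaining face. -/
structure TComplexStruct (X : SSet) where
  thin : ∀ ⦃n : ℕ⦄, X _⦋n + 1⦌ → Prop
  thin_of_degenerate : ∀ {n : ℕ} (x : X _⦋n + 1⦌), IsDegenerate X x → thin x
  fill_existsUnique : ∀ {n : ℕ} (i : Fin (n + 2)) (h : (Λ[n + 1, i] : SSet) ⟶ X),
      ∃! y : X _⦋n + 1⦌, thin y ∧ Fills X h y
  thin_face : ∀ {n : ℕ} (x : X _⦋n + 2⦌) (i : Fin (n + 3)),
      thin x → (∀ j : Fin (n + 3), j ≠ i → thin (X.δ j x)) → thin (X.δ i x)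


-- AUX SECTION (to be inserted into proof.lean before the theorem)
section Aux

open SimplexCategory

variable {X : SSet}

/-- Compatibility of a family of prospective faces of an `(n+2)`-simplex. -/
def Compat {n : ℕ} (i : Fin (n + 3)) (x : Fin (n + 3) → X _⦋n + 1⦌) : Prop :=
  ∀ (j : Fin (n + 3)) (k : Fin (n + 2)) (h : k.castSucc < j) (_ : j ≠ i) (_ : k.castSucc ≠ i),
    X.δ k (x j) =
      X.δ (j.pred (Fin.pos_iff_ne_zero.mp (lt_of_le_of_lt (Fin.zero_le _) h))) (x k.castSucc)

lemma indep_aux {n : ℕ} {i : Fin (n + 3)} {x : Fin (n + 3) → X _⦋n + 1⦌}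
    (hx : Compat i x) {m : ℕ} (f : (⦋m⦌ : SimplexCategory) ⟶ ⦋n + 2⦌)
    (j j' : Fin (n + 3)) (hj : ∀ k, f.toOrderHom k ≠ j) (hj' : ∀ k, f.toOrderHom k ≠ j')
    (hji : j ≠ i) (hj'i : j' ≠ i) (h : j' < j) :
    X.map (factor_δ f j).op (x j) = X.map (factor_δ f j').op (x j') := by
  have hj0 : j ≠ 0 := Fin.pos_iff_ne_zero.mp (lt_of_le_of_lt (Fin.zero_le _) h)
  set k : Fin (n + 2) := j'.castPred (Fin.ne_last_of_lt h) with hk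
  have hkc : k.castSucc = j' := Fin.castSucc_castPred _ _
  set g := factor_δ f j with hgdef
  have hg : g ≫ SimplexCategory.δ j = f := factor_δ_spec f j hj
  have hkmiss : ∀ l, g.toOrderHom l ≠ k := by
    intro l hl
    apply hj' l
    have h1 : (SimplexCategory.δ j).toOrderHom (g.toOrderHom l) = f.toOrderHom l := by
      rw [← hg]; rfl
    rw [hl] at h1
    have h2 : (SimplexCategory.δ j).toOrderHom k = j' := by
      show j.succAbove k = j'
      rw [Fin.succAbove_of_castSucc_lt _ _ (hkc ▸ h), hkc]
    rw [h2] at h1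
    exact h1.symm
  set e := factor_δ g k with hedef
  have he : e ≫ SimplexCategory.δ k = g := factor_δ_spec g k hkmiss
  have hB : e ≫ SimplexCategory.δ (j.pred hj0) = factor_δ f j' := by
    rw [← cancel_mono (SimplexCategory.δ j'), factor_δ_spec f j' hj', Category.assoc]
    have hcomp : SimplexCategory.δ (j.pred hj0) ≫ SimplexCategory.δ j' =
        SimplexCategory.δ k ≫ SimplexCategory.δ j := by
      rw [← hkc]
      exact (SimplexCategory.δ_comp_δ' (i := k) (j := j) (hkc ▸ h)).symm
    rw [hcomp, ← Category.assoc, he, hg]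
  have hC : k.castSucc < j := hkc ▸ h
  calc X.map g.op (x j) = X.map (e ≫ SimplexCategory.δ k).op (x j) := by rw [he]
    _ = X.map e.op (X.δ k (x j)) := by
        rw [op_comp, FunctorToTypes.map_comp_apply]; rfl
    _ = X.map e.op (X.δ (j.pred hj0) (x k.castSucc)) := by
        rw [hx j k hC hji (hkc ▸ hj'i)]
    _ = X.map (e ≫ SimplexCategory.δ (j.pred hj0)).op (x k.castSucc) := by
        rw [op_comp, FunctorToTypes.map_comp_apply]; rfl
    _ = X.map (factor_δ f j').op (x j') := by rw [hB, hkc]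

lemma indep {n : ℕ} {i : Fin (n + 3)} {x : Fin (n + 3) → X _⦋n + 1⦌}
    (hx : Compat i x) {m : ℕ} (f : (⦋m⦌ : SimplexCategory) ⟶ ⦋n + 2⦌)
    (j j' : Fin (n + 3)) (hj : ∀ k, f.toOrderHom k ≠ j) (hj' : ∀ k, f.toOrderHom k ≠ j')
    (hji : j ≠ i) (hj'i : j' ≠ i) :
    X.map (factor_δ f j).op (x j) = X.map (factor_δ f j').op (x j') := by
  rcases lt_trichotomy j' j with h | h | h
  · exact indep_aux hx f j j' hj hj' hji hj'i h
  · subst h; rfl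
  · exact (indep_aux hx f j' j hj' hj hj'i hji h).symm

/-- Choose an index missed by a horn simplex. -/
noncomputable def pick {n : ℕ} {i : Fin (n + 3)} {m : SimplexCategoryᵒᵖ}
    (α : (Λ[n + 2, i] : SSet).obj m) : Fin (n + 3) :=
  ((Set.ne_univ_iff_exists_notMem _).mp α.2).choose

lemma pick_notMem {n : ℕ} {i : Fin (n + 3)} {m : SimplexCategoryᵒᵖ}
    (α : (Λ[n + 2, i] : SSet).obj m) :
    pick α ∉ Set.range (stdSimplex.asOrderHom α.1) ∪ {i} :=
  ((Set.ne_univ_iff_exists_notMem _).mp α.2).choose_spec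

lemma pick_spec {n : ℕ} {i : Fin (n + 3)} {m : SimplexCategoryᵒᵖ}
    (α : (Λ[n + 2, i] : SSet).obj m) :
    (∀ l, stdSimplex.asOrderHom α.1 l ≠ pick α) ∧ pick α ≠ i := by
  have := pick_notMem α
  simp only [Set.union_singleton, Set.mem_insert_iff, Set.mem_range, not_or, not_exists] at this
  exact ⟨fun l h => this.2 l h, this.1⟩

lemma pick_miss {n : ℕ} {i : Fin (n + 3)} {m : SimplexCategoryᵒᵖ}
    (α : (Λ[n + 2, i] : SSet).obj m) (l) :
    (stdSimplex.objEquiv α.1).toOrderHom l ≠ pick α := (pick_spec α).1 l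

/-- A horn hom built from a compatible family of faces. -/
noncomputable def hornHomMk {n : ℕ} (i : Fin (n + 3)) (x : Fin (n + 3) → X _⦋n + 1⦌)
    (hx : Compat i x) : (Λ[n + 2, i] : SSet) ⟶ X where
  app m := TypeCat.ofHom fun α => X.map ((stdSimplex.objEquiv α.1) ≫
      SimplexCategory.σ (Fin.predAbove 0 (pick α))).op (x (pick α))
  naturality := by
    intro m m' ϕ
    induction' m using Opposite.rec with mc
    induction' m' using Opposite.rec with m'c
    induction' mc using SimplexCategory.rec with a
    induction' m'c using SimplexCategory.rec with b
    ext α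
    set α' := (Λ[n + 2, i] : SSet).map ϕ α with hα'
    set f := stdSimplex.objEquiv α.1 with hf
    set ψ := ϕ.unop with hψ
    have key1 : stdSimplex.objEquiv α'.1 = ψ ≫ f := by
      show stdSimplex.objEquiv (Δ[n + 2].map ϕ α.1) = ψ ≫ f
      rw [stdSimplex.map_apply, Equiv.apply_symm_apply]
    have miss1 : ∀ l, (ψ ≫ f).toOrderHom l ≠ pick α' := by
      rw [← key1]; exact pick_miss α'
    have miss2 : ∀ l, (ψ ≫ f).toOrderHom l ≠ pick α := by
      intro l
      exact pick_miss α (ψ.toOrderHom l)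
    have step : X.map (factor_δ (ψ ≫ f) (pick α')).op (x (pick α')) =
        X.map (factor_δ (ψ ≫ f) (pick α)).op (x (pick α)) :=
      indep hx (ψ ≫ f) (pick α') (pick α) miss1 miss2 (pick_spec α').2 (pick_spec α).2
    show X.map ((stdSimplex.objEquiv α'.1) ≫
        SimplexCategory.σ (Fin.predAbove 0 (pick α'))).op (x (pick α')) =
      X.map ϕ (X.map (f ≫ SimplexCategory.σ (Fin.predAbove 0 (pick α))).op (x (pick α)))
    rw [key1]
    have e1 : (ψ ≫ f) ≫ SimplexCategory.σ (Fin.predAbove 0 (pick α')) =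
        factor_δ (ψ ≫ f) (pick α') := rfl
    have e2 : factor_δ (ψ ≫ f) (pick α) =
        ψ ≫ (f ≫ SimplexCategory.σ (Fin.predAbove 0 (pick α))) := by
      show (ψ ≫ f) ≫ _ = _
      rw [Category.assoc]
    rw [e1, step, e2, op_comp, FunctorToTypes.map_comp_apply]
    rfl

lemma hornHomMk_face {n : ℕ} {i : Fin (n + 3)} (x : Fin (n + 3) → X _⦋n + 1⦌)
    (hx : Compat i x) (j : Fin (n + 3)) (hj : j ≠ i) :
    (hornHomMk i x hx).app (op ⦋n + 1⦌) (horn.face i j hj) = x j := by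
  set α := horn.face i j hj with hα
  have hface : stdSimplex.objEquiv α.1 = SimplexCategory.δ j := by
    show stdSimplex.objEquiv (stdSimplex.objEquiv.symm _) = _
    rw [Equiv.apply_symm_apply]
    exact Category.id_comp (obj := SimplexCategory) (SimplexCategory.δ j)
  have hp : pick α = j := by
    by_contra hp
    obtain ⟨l, hl⟩ := Fin.exists_succAbove_eq hp
    exact pick_miss α l (by rw [hface]; exact hl)
  show X.map (stdSimplex.objEquiv α.1 ≫
      SimplexCategory.σ (Fin.predAbove 0 (pick α))).op (x (pick α)) = x j
  rw [hp, hface]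
  have hid : SimplexCategory.δ j ≫ SimplexCategory.σ (Fin.predAbove 0 j) = 𝟙 _ := by
    rw [← cancel_mono (SimplexCategory.δ j), Category.id_comp]
    exact factor_δ_spec (SimplexCategory.δ j) j (fun l => Fin.succAbove_ne j l)
  rw [hid, op_id, FunctorToTypes.map_id_apply]

lemma fills_hornHomMk {n : ℕ} {i : Fin (n + 3)} (x : Fin (n + 3) → X _⦋n + 1⦌)
    (hx : Compat i x) (y : X _⦋n + 2⦌)
    (hy : ∀ (j : Fin (n + 3)), j ≠ i → X.δ j y = x j) :
    Fills X (hornHomMk i x hx) y := by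
  intro j hj
  rw [hy j hj, hornHomMk_face]

lemma dd {p : ℕ} (a : Fin (p + 2)) (b : Fin (p + 3)) (y : X _⦋p + 2⦌) :
    X.δ a (X.δ b y) = X.map (SimplexCategory.δ a ≫ SimplexCategory.δ b).op y := by
  dsimp [SimplicialObject.δ]
  rw [FunctorToTypes.map_comp_apply]

end Aux


/-- associativity of composition of 1-simplices in a simplicial T-complex.
Given composable 1-simplices `f`, `g`, `h`, a thin 2-simplex `u` witnessing the composite
`gf` of `f` and `g`, a thin 2-simplex `v` witnessing the composite `hg` of `g` and `h`,
a thin 2-simplex `w` witnessing the composite `(hg)f` of `f` and `hg`, and a thin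
2-simplex `t` witnessing the composite `h(gf)` of `gf` and `h`, we have `(hg)f = h(gf)`.
(The composite of two composable 1-simplices `a`, `b` is the 1st face of the unique thin
filler of the `Λ²₁`-horn they form, i.e. of a thin 2-simplex with 2nd face `a` and
0th face `b`.) -/
theorem assoc_of_one_simplices (X : SSet) (T : TComplexStruct X)
    (f g h gf hg hg_f h_gf : X _⦋1⦌)
    (u : X _⦋2⦌) (hu : T.thin u)
    (hu2 : X.δ 2 u = f) (hu0 : X.δ 0 u = g) (hu1 : X.δ 1 u = gf)
    (v : X _⦋2⦌) (hv : T.thin v)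
    (hv2 : X.δ 2 v = g) (hv0 : X.δ 0 v = h) (hv1 : X.δ 1 v = hg)
    (w : X _⦋2⦌) (hw : T.thin w)
    (hw2 : X.δ 2 w = f) (hw0 : X.δ 0 w = hg) (hw1 : X.δ 1 w = hg_f)
    (t : X _⦋2⦌) (ht : T.thin t)
    (ht2 : X.δ 2 t = gf) (ht0 : X.δ 0 t = h) (ht1 : X.δ 1 t = h_gf) :
    hg_f = h_gf := by
  classical
  -- simplicial identities in low dimensions
  have q1 : SimplexCategory.δ (0 : Fin 3) ≫ SimplexCategory.δ (1 : Fin 4)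
      = SimplexCategory.δ (0 : Fin 3) ≫ SimplexCategory.δ (0 : Fin 4) := by
    ext l : 3; revert l; decide
  have q2 : SimplexCategory.δ (2 : Fin 3) ≫ SimplexCategory.δ (1 : Fin 4)
      = SimplexCategory.δ (1 : Fin 3) ≫ SimplexCategory.δ (3 : Fin 4) := by
    ext l : 3; revert l; decide
  have q3 : SimplexCategory.δ (1 : Fin 3) ≫ SimplexCategory.δ (1 : Fin 4)
      = SimplexCategory.δ (1 : Fin 3) ≫ SimplexCategory.δ (2 : Fin 4) := by
    ext l : 3; revert l; decide
  have q4 : SimplexCategory.δ (1 : Fin 2) ≫ SimplexCategory.δ (0 : Fin 3)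
      = SimplexCategory.δ (0 : Fin 2) ≫ SimplexCategory.δ (2 : Fin 3) := by
    ext l : 3; revert l; decide
  have q5 : SimplexCategory.δ (0 : Fin 2) ≫ SimplexCategory.δ (1 : Fin 3)
      = SimplexCategory.δ (0 : Fin 2) ≫ SimplexCategory.δ (0 : Fin 3) := by
    ext l : 3; revert l; decide
  -- the inner horn Λ[3,1] with faces v, w, u
  have hc3 : Compat (X := X) (n := 1) 1 ![v, v, w, u] := by
    intro j k hlt hji hki
    fin_cases j <;> fin_cases k <;>
      first
        | exact absurd hlt (by decide)
        | exact absurd hki (by decide)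
        | exact absurd hji (by decide)
        | skip
    · show X.δ 0 w = X.δ 1 v
      rw [hw0, hv1]
    · show X.δ 0 u = X.δ 2 v
      rw [hu0, hv2]
    · show X.δ 2 u = X.δ 2 w
      rw [hu2, hw2]
  obtain ⟨y, ⟨hyt, hyf⟩, -⟩ := T.fill_existsUnique 1 (hornHomMk 1 ![v, v, w, u] hc3)
  have hy0 : X.δ 0 y = v := by
    rw [hyf 0 (by decide), hornHomMk_face]; simp
  have hy2 : X.δ 2 y = w := by
    rw [hyf 2 (by decide), hornHomMk_face]; simp
  have hy3 : X.δ 3 y = u := by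
    rw [hyf 3 (by decide), hornHomMk_face]; simp
  -- faces of the middle face m = δ₁ y
  have hm0 : X.δ 0 (X.δ 1 y) = h := by
    rw [dd, q1, ← dd, hy0, hv0]
  have hm2 : X.δ 2 (X.δ 1 y) = gf := by
    rw [dd, q2, ← dd, hy3, hu1]
  have hm1 : X.δ 1 (X.δ 1 y) = hg_f := by
    rw [dd, q3, ← dd, hy2, hw1]
  have hmt : T.thin (X.δ 1 y) := by
    apply T.thin_face y 1 hyt
    intro j hj
    fin_cases j
    · show T.thin (X.δ (0 : Fin 4) y); rw [hy0]; exact hv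
    · exact absurd rfl hj
    · show T.thin (X.δ (2 : Fin 4) y); rw [hy2]; exact hw
    · show T.thin (X.δ (3 : Fin 4) y); rw [hy3]; exact hu
  -- the inner horn Λ[2,1] with faces h and gf
  have vert : X.δ 0 gf = X.δ 1 h := by
    have l1 : X.δ 0 gf = X.δ 0 g := by rw [← hu1, dd, q5, ← dd, hu0]
    have l2 : X.δ 1 h = X.δ 0 g := by rw [← hv0, dd, q4, ← dd, hv2]
    rw [l1, l2]
  have hc2 : Compat (X := X) (n := 0) 1 ![h, h, gf] := by
    intro j k hlt hji hki
    fin_cases j <;> fin_cases k <;>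
      first
        | exact absurd hlt (by decide)
        | exact absurd hki (by decide)
        | exact absurd hji (by decide)
        | skip
    show X.δ 0 gf = X.δ 1 h
    exact vert
  obtain ⟨z, -, hzu⟩ := T.fill_existsUnique 1 (hornHomMk 1 ![h, h, gf] hc2)
  have em : X.δ 1 y = z := by
    apply hzu
    refine ⟨hmt, fills_hornHomMk _ _ _ ?_⟩
    intro j hj
    fin_cases j
    · exact hm0
    · exact absurd rfl hj
    · exact hm2
  have et : t = z := by
    apply hzu
    refine ⟨ht, fills_hornHomMk _ _ _ ?_⟩
    intro j hj
    fin_cases j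
    · exact ht0
    · exact absurd rfl hj
    · exact ht2
  calc hg_f = X.δ 1 (X.δ 1 y) := hm1.symm
    _ = X.δ 1 t := by rw [em, ← et]
    _ = h_gf := ht1


end Strict
end

section
/- In a simplicial T-complex, if all faces of a sphere ∂Δⁿ → X are thin, then for every k the face d_k of the unique thin filler of the sub-horn Λⁿ_k equals the k-th face of the original sphere; consequently the sphere itself admits a thin filler that is unique. -/
open CategoryTheory Simplicial SSet Opposite

namespace Strict

/-- A sphere `∂Δ[n+2] → X`, given as a compatible family of `(n+1)`-simplices. -/
def IsSphere (X : SSet) {n : ℕ} (s : Fin (n + 3) → X _⦋n + 1⦌) : Prop :=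
  ∀ (a b : Fin (n + 2)), a ≤ b → X.δ a (s b.succ) = X.δ b (s a.castSucc)

open SimplexCategory

/-- The horn map obtained by restricting the map classified by a simplex `x`. -/
def simplexHorn (X : SSet) {n : ℕ} (x : X _⦋n + 1⦌) (i : Fin (n + 2)) : (Λ[n + 1, i] : SSet) ⟶ X where
  app m := TypeCat.ofHom fun α => X.map ((stdSimplex.objEquiv) α.1).op x
  naturality m₁ m₂ θ := by
    ext α
    show X.map ((stdSimplex.objEquiv) (Δ[n+1].map θ α.1)).op x = _
    rw [stdSimplex.map_apply, Equiv.apply_symm_apply, op_comp, X.map_comp]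
    rfl

lemma simplexHorn_face (X : SSet) {n : ℕ} (x : X _⦋n + 1⦌) (i j : Fin (n + 2)) (hj : j ≠ i) :
    (simplexHorn X x i).app (op ⦋n⦌) (horn.face i j hj) = X.δ j x := by
  dsimp [simplexHorn, horn.face]
  show X.map (𝟙 _ ≫ SimplexCategory.δ j).op x = _
  rw [Category.id_comp]
  rfl


lemma factor_eq_lt (X : SSet) {n : ℕ} (s : Fin (n + 3) → X _⦋n + 1⦌) (hs : IsSphere X s)
    {m : ℕ} (f : (⦋m⦌ : SimplexCategory) ⟶ ⦋n + 2⦌) {j j' : Fin (n + 3)} (hlt : j < j')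
    (hj : ∀ k, f.toOrderHom k ≠ j) (hj' : ∀ k, f.toOrderHom k ≠ j') :
    X.map (factor_δ f j).op (s j) = X.map (factor_δ f j').op (s j') := by
  have hjlast : j ≠ Fin.last _ := by
    rintro rfl; exact absurd (hlt.trans_le (Fin.le_last _)) (lt_irrefl _)
  have hj'0 : j' ≠ 0 := by rintro rfl; exact (Fin.not_lt_zero j) hlt
  set a : Fin (n + 2) := j.castPred hjlast with ha
  set b : Fin (n + 2) := j'.pred hj'0 with hb
  have haj : a.castSucc = j := Fin.castSucc_castPred j hjlast
  have hbj : b.succ = j' := Fin.succ_pred j' hj'0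
  have hab : a ≤ b := by
    rw [← Fin.castSucc_lt_succ_iff, haj, hbj]; exact hlt
  -- f misses j', factor through δ j'
  have spec' : factor_δ f j' ≫ SimplexCategory.δ j' = f := factor_δ_spec f j' hj'
  -- factor_δ f j' misses a
  have hm : ∀ k, (factor_δ f j').toOrderHom k ≠ a := by
    intro k hk
    apply hj k
    have := congrArg (fun g => (Hom.toOrderHom g) k) spec'
    simp only [comp_toOrderHom, OrderHom.comp_coe, Function.comp_apply] at this
    rw [← this, hk]
    show j'.succAbove a = j
    rw [Fin.succAbove_of_castSucc_lt _ _ (by rw [haj, hbj] at *; exact hlt), haj]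
  set g := factor_δ (factor_δ f j') a with hg
  have spec1 : g ≫ SimplexCategory.δ a = factor_δ f j' := factor_δ_spec _ a hm
  have key : (g ≫ SimplexCategory.δ b) ≫ SimplexCategory.δ j = f := by
    rw [← haj, Category.assoc, ← SimplexCategory.δ_comp_δ hab, ← Category.assoc, spec1, hbj, spec']
  have hfj : factor_δ f j = g ≫ SimplexCategory.δ b := by
    apply (cancel_mono (SimplexCategory.δ j)).mp
    rw [factor_δ_spec f j hj, key]
  have hfj' : factor_δ f j' = g ≫ SimplexCategory.δ a := spec1.symm
  rw [hfj, hfj', op_comp, op_comp, X.map_comp, X.map_comp]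
  dsimp
  rw [← haj, ← hbj]
  show X.map g.op (X.δ b (s a.castSucc)) = X.map g.op (X.δ a (s b.succ))
  rw [hs a b hab]

lemma factor_eq (X : SSet) {n : ℕ} (s : Fin (n + 3) → X _⦋n + 1⦌) (hs : IsSphere X s)
    {m : ℕ} (f : (⦋m⦌ : SimplexCategory) ⟶ ⦋n + 2⦌) {j j' : Fin (n + 3)}
    (hj : ∀ k, f.toOrderHom k ≠ j) (hj' : ∀ k, f.toOrderHom k ≠ j') :
    X.map (factor_δ f j).op (s j) = X.map (factor_δ f j').op (s j') := by
  rcases lt_trichotomy j j' with h | h | h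
  · exact factor_eq_lt X s hs f h hj hj'
  · rw [h]
  · exact (factor_eq_lt X s hs f h hj' hj).symm

/-- A simplex of `Δ[q]`, as a morphism in the simplex category with `ℕ`-indexed source. -/
def toHom {m : SimplexCategoryᵒᵖ} {q : ℕ} (α : Δ[q].obj m) :
    (⦋(unop m).len⦌ : SimplexCategory) ⟶ ⦋q⦌ :=
  (stdSimplex.objEquiv) α

/-- For `α` in the horn, some vertex is missed by `α`. -/
lemma horn_missing_vertex {n : ℕ} {i : Fin (n + 2)} {m : SimplexCategoryᵒᵖ}
    (α : (Λ[n + 1, i] : SSet).obj m) :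
    ∃ j, ∀ k, (Hom.toOrderHom (toHom α.1)) k ≠ j := by
  obtain ⟨f, hf⟩ := α
  obtain ⟨f', rfl⟩ := (stdSimplex.objEquiv).symm.surjective f
  obtain ⟨j, -, h⟩ : ∃ j, ¬j = i ∧ ∀ k, (Hom.toOrderHom f') k ≠ j := by
    simp [← Set.univ_subset_iff, Set.subset_def, stdSimplex.asOrderHom, not_or, mem_horn_iff] at hf
    exact hf
  exact ⟨j, by simpa [toHom] using h⟩

/-- The horn map associated to a sphere. -/
noncomputable def sphereHorn (X : SSet) {n : ℕ} (s : Fin (n + 3) → X _⦋n + 1⦌)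
    (hs : IsSphere X s) (i : Fin (n + 3)) : (Λ[n + 2, i] : SSet) ⟶ X where
  app m := TypeCat.ofHom fun α =>
    X.map (factor_δ (toHom α.1) (horn_missing_vertex α).choose).op
      (s (horn_missing_vertex α).choose)
  naturality m₁ m₂ θ := by
    ext α
    set f₁ := toHom (q := n + 2) α.1 with hf₁
    set c₁ := (horn_missing_vertex α).choose with hc₁
    have hmap : toHom (q := n + 2) ((Λ[n + 2, i] : SSet).map θ α).1 = θ.unop ≫ f₁ := by
      show ((stdSimplex.objEquiv) (Δ[n + 2].map θ α.1)) = θ.unop ≫ f₁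
      rw [stdSimplex.map_apply, Equiv.apply_symm_apply]
      rfl
    have hmiss : ∀ k, (Hom.toOrderHom (toHom (q := n + 2) ((Λ[n + 2, i] : SSet).map θ α).1)) k ≠ c₁ := by
      intro k
      rw [hmap]
      simp only [comp_toOrderHom, OrderHom.comp_coe, Function.comp_apply]
      exact (horn_missing_vertex α).choose_spec _
    show X.map (factor_δ (toHom ((Λ[n + 2, i] : SSet).map θ α).1) _).op _
        = X.map θ (X.map (factor_δ f₁ c₁).op (s c₁))
    rw [factor_eq X s hs _ (horn_missing_vertex ((Λ[n + 2, i] : SSet).map θ α)).choose_spec hmiss, hmap]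
    show X.map ((θ.unop ≫ f₁) ≫ σ _).op _ = _
    rw [Category.assoc, op_comp, X.map_comp]
    rfl

lemma sphereHorn_face (X : SSet) {n : ℕ} (s : Fin (n + 3) → X _⦋n + 1⦌)
    (hs : IsSphere X s) (i : Fin (n + 3)) (j : Fin (n + 3)) (hj : j ≠ i) :
    (sphereHorn X s hs i).app (op ⦋n + 1⦌) (horn.face i j hj) = s j := by
  have hval : toHom (q := n + 2) (horn.face i j hj).1 = SimplexCategory.δ j := by
    show ((stdSimplex.objEquiv) ((stdSimplex.objEquiv).symm _)) = _
    rw [Equiv.apply_symm_apply]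
    exact Category.id_comp (SimplexCategory.δ j)
  have h2 : ∀ k, (Hom.toOrderHom (toHom (q := n + 2) (horn.face i j hj).1)) k ≠ j := by
    intro k
    rw [hval]
    show j.succAbove k ≠ j
    exact Fin.succAbove_ne j k
  have hid : factor_δ (SimplexCategory.δ j) j = 𝟙 _ := by
    apply (cancel_mono (SimplexCategory.δ j)).mp
    rw [factor_δ_spec (SimplexCategory.δ j) j (fun k => show j.succAbove k ≠ j from Fin.succAbove_ne j k), Category.id_comp]
  show X.map (factor_δ (toHom (horn.face i j hj).1) _).op _ = s j
  rw [factor_eq X s hs _ (horn_missing_vertex (horn.face i j hj)).choose_spec h2, hval, hid]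
  simp


/-- in a simplicial T-complex, if all faces of a sphere `∂Δⁿ → X` are thin,
then for every `k` any thin filler of the sub-horn `Λⁿ_k` has `k`-th face equal to the
`k`-th face of the sphere; consequently the sphere admits a unique thin filler. -/
theorem thin_sphere_filler (X : SSet) (T : TComplexStruct X) (n : ℕ)
    (s : Fin (n + 3) → X _⦋n + 1⦌) (hs : IsSphere X s)
    (hthin : ∀ k, T.thin (s k)) :
    (∀ (k : Fin (n + 3)) (y : X _⦋n + 2⦌), T.thin y →
        (∀ j : Fin (n + 3), j ≠ k → X.δ j y = s j) → X.δ k y = s k) ∧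
    (∃! y : X _⦋n + 2⦌, T.thin y ∧ ∀ j : Fin (n + 3), X.δ j y = s j) := by
  have part1 : ∀ (k : Fin (n + 3)) (y : X _⦋n + 2⦌), T.thin y →
      (∀ j : Fin (n + 3), j ≠ k → X.δ j y = s j) → X.δ k y = s k := by
    intro k y hy hfaces
    have hw : T.thin (X.δ k y) :=
      T.thin_face y k hy (fun j hj => (hfaces j hj) ▸ hthin j)
    have hface : ∀ a : Fin (n + 2), X.δ a (X.δ k y) = X.δ a (s k) := by
      intro a
      rcases lt_or_ge a.castSucc k with h | h
      · have hk0 : k ≠ 0 := by rintro rfl; exact (Fin.not_lt_zero _ h)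
        set b := k.pred hk0 with hbdef
        have hbk : b.succ = k := Fin.succ_pred k hk0
        have hab : a ≤ b := by rw [← Fin.castSucc_lt_succ_iff, hbk]; exact h
        have id1 := types_congr_hom (X.δ_comp_δ hab) y
        simp only [types_comp_apply] at id1
        calc X.δ a (X.δ k y) = X.δ a (X.δ b.succ y) := by rw [hbk]
          _ = X.δ b (X.δ a.castSucc y) := id1
          _ = X.δ b (s a.castSucc) := by rw [hfaces a.castSucc h.ne]
          _ = X.δ a (s b.succ) := (hs a b hab).symm
          _ = X.δ a (s k) := by rw [hbk]
      · have hkl : k ≠ Fin.last _ := by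
          rintro rfl
          exact absurd ((Fin.castSucc_lt_last a).trans_le' h) (lt_irrefl _)
        set c := k.castPred hkl with hcdef
        have hck : c.castSucc = k := Fin.castSucc_castPred k hkl
        have hca : c ≤ a := by
          rw [← Fin.castSucc_le_castSucc_iff, hck]; exact h
        have id2 := types_congr_hom (X.δ_comp_δ hca) y
        simp only [types_comp_apply] at id2
        have hsk : a.succ ≠ k := by
          rw [← hck]; exact (Fin.castSucc_lt_succ_iff.mpr hca).ne'
        calc X.δ a (X.δ k y) = X.δ a (X.δ c.castSucc y) := by rw [hck]
          _ = X.δ c (X.δ a.succ y) := id2.symm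
          _ = X.δ c (s a.succ) := by rw [hfaces a.succ hsk]
          _ = X.δ a (s c.castSucc) := hs c a hca
          _ = X.δ a (s k) := by rw [hck]
    obtain ⟨z, ⟨hz, hzf⟩, huniq⟩ := T.fill_existsUnique (0 : Fin (n + 2)) (simplexHorn X (s k) 0)
    have e1 : X.δ k y = z :=
      huniq _ ⟨hw, fun j hj => (hface j).trans (simplexHorn_face X (s k) 0 j hj).symm⟩
    have e2 : s k = z :=
      huniq _ ⟨hthin k, fun j hj => (simplexHorn_face X (s k) 0 j hj).symm⟩
    exact e1.trans e2.symm
  refine ⟨part1, ?_⟩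
  obtain ⟨y, ⟨hy, hyf⟩, hyu⟩ :=
    T.fill_existsUnique (n := n + 1) (0 : Fin (n + 3)) (sphereHorn X s hs 0)
  have hfaces : ∀ j : Fin (n + 3), j ≠ 0 → X.δ j y = s j :=
    fun j hj => (hyf j hj).trans (sphereHorn_face X s hs 0 j hj)
  have h0 : X.δ 0 y = s 0 := part1 0 y hy hfaces
  refine ⟨y, ⟨hy, fun j => ?_⟩, fun y' hy' => hyu y'
    ⟨hy'.1, fun j hj => (hy'.2 j).trans (sphereHorn_face X s hs 0 j hj).symm⟩⟩
  by_cases hj : j = 0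
  · rw [hj]; exact h0
  · exact hfaces j hj


end Strict
end

section
/- A simplicial abelian group A becomes a simplicial T-complex when a simplex is declared thin if and only if it is a sum of degenerate simplices: every degenerate simplex is thin, every horn has a unique thin filler, and thin fillers of horns with all thin faces have thin remaining face. -/
open CategoryTheory Simplicial SSet Opposite

namespace Strict

/-- The underlying simplicial set of a simplicial abelian group. -/
def toSSet : SimplicialObject AddCommGrpCat ⥤ SSet :=
  (SimplicialObject.whiskering _ _).obj (forget AddCommGrpCat)

section Aux

variable (A : SimplicialObject AddCommGrpCat)


def Dsub (n : ℕ) : AddSubgroup (A.obj (op ⦋n + 1⦌)) :=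
  AddSubgroup.closure (setOf fun a : A.obj (op ⦋n + 1⦌) => ∃ (i : Fin (n + 1)) (y : A.obj (op ⦋n⦌)), A.σ i y = a)

lemma σ_mem_Dsub {n : ℕ} (k : Fin (n+1)) (y : A.obj (op ⦋n⦌)) : A.σ k y ∈ Dsub A n :=
  AddSubgroup.subset_closure ⟨k, y, rfl⟩

lemma dσ_succ {m : ℕ} (k : Fin (m+1)) (u : A.obj (op ⦋m⦌)) :
    A.δ k.succ (A.σ k u) = u := by
  calc A.δ k.succ (A.σ k u) = (A.σ k ≫ A.δ k.succ) u := rfl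
    _ = u := by rw [A.δ_comp_σ_succ]; rfl

lemma dσ_self {m : ℕ} (k : Fin (m+1)) (u : A.obj (op ⦋m⦌)) :
    A.δ k.castSucc (A.σ k u) = u := by
  calc A.δ k.castSucc (A.σ k u) = (A.σ k ≫ A.δ k.castSucc) u := rfl
    _ = u := by rw [A.δ_comp_σ_self]; rfl

lemma dσ_le {m : ℕ} {i : Fin (m+2)} {j : Fin (m+1)} (H : i ≤ j.castSucc) (u : A.obj (op ⦋m+1⦌)) :
    A.δ i.castSucc (A.σ j.succ u) = A.σ j (A.δ i u) := by
  calc A.δ i.castSucc (A.σ j.succ u) = (A.σ j.succ ≫ A.δ i.castSucc) u := rfl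
    _ = (A.δ i ≫ A.σ j) u := by rw [A.δ_comp_σ_of_le H]
    _ = A.σ j (A.δ i u) := rfl

lemma dσ_gt {m : ℕ} {i : Fin (m+2)} {j : Fin (m+1)} (H : j.castSucc < i) (u : A.obj (op ⦋m+1⦌)) :
    A.δ i.succ (A.σ j.castSucc u) = A.σ j (A.δ i u) := by
  calc A.δ i.succ (A.σ j.castSucc u) = (A.σ j.castSucc ≫ A.δ i.succ) u := rfl
    _ = (A.δ i ≫ A.σ j) u := by rw [A.δ_comp_σ_of_gt H]
    _ = A.σ j (A.δ i u) := rfl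

lemma dd_s5 {m : ℕ} {i j : Fin (m+2)} (H : i ≤ j) (u : A.obj (op ⦋m+2⦌)) :
    A.δ i (A.δ j.succ u) = A.δ j (A.δ i.castSucc u) := by
  calc A.δ i (A.δ j.succ u) = (A.δ j.succ ≫ A.δ i) u := rfl
    _ = (A.δ i.castSucc ≫ A.δ j) u := by rw [A.δ_comp_δ H]
    _ = A.δ j (A.δ i.castSucc u) := rfl

lemma σσ {m : ℕ} {i j : Fin (m+1)} (H : i ≤ j) (u : A.obj (op ⦋m⦌)) :
    A.σ i.castSucc (A.σ j u) = A.σ j.succ (A.σ i u) := by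
  calc A.σ i.castSucc (A.σ j u) = (A.σ j ≫ A.σ i.castSucc) u := rfl
    _ = (A.σ i ≫ A.σ j.succ) u := by rw [A.σ_comp_σ H]
    _ = A.σ j.succ (A.σ i u) := rfl


lemma hom_sum {X Y : AddCommGrpCat} (f : X ⟶ Y) {ι : Type} (g : ι → X) (s : Finset ι) :
    f (∑ i ∈ s, g i) = ∑ i ∈ s, f (g i) :=
  map_sum (ConcreteCategory.hom f) g s

lemma mem_Dsub_iff {n : ℕ} (x : A.obj (op ⦋n+1⦌)) :
    x ∈ Dsub A n ↔ ∃ y : Fin (n+1) → A.obj (op ⦋n⦌), x = ∑ k, A.σ k (y k) := by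
  constructor
  · intro hx
    induction hx using AddSubgroup.closure_induction with
    | mem a ha =>
      obtain ⟨i, y, rfl⟩ := ha
      refine ⟨fun k => if k = i then y else 0, ?_⟩
      rw [Finset.sum_congr rfl (g := fun k => if k = i then A.σ i y else 0)]
      · simp
      · intro k _
        by_cases hk : k = i
        · subst hk; simp
        · simp only [hk, if_false]
          exact map_zero (ConcreteCategory.hom (A.σ k))
    | zero => exact ⟨0, by simp [map_zero (ConcreteCategory.hom (A.σ _))]⟩
    | add a b _ _ ha hb => ?_
    | neg a _ ha => ?_
    · obtain ⟨y, rfl⟩ := ha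
      obtain ⟨z, rfl⟩ := hb
      refine ⟨y + z, ?_⟩
      rw [← Finset.sum_add_distrib]
      exact Finset.sum_congr rfl fun k _ => (map_add (ConcreteCategory.hom (A.σ k)) _ _).symm
    · obtain ⟨y, rfl⟩ := ha
      refine ⟨-y, ?_⟩
      rw [← Finset.sum_neg_distrib]
      exact Finset.sum_congr rfl fun k _ => (map_neg (ConcreteCategory.hom (A.σ k)) _).symm
  · rintro ⟨y, rfl⟩
    exact AddSubgroup.sum_mem _ fun k _ => σ_mem_Dsub A k (y k)

set_option maxHeartbeats 1000000 in
theorem zero_of_faces (n : ℕ) (i : Fin (n+2)) (z : A.obj (op ⦋n+1⦌))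
    (hz : z ∈ Dsub A n) (h0 : ∀ j : Fin (n+2), j ≠ i → A.δ j z = 0) : z = 0 := by
  set P : ℕ → ℕ → Prop := fun a b =>
    ∃ y : Fin (n+1) → A.obj (op ⦋n⦌),
      (∀ k : Fin (n+1), ((k:ℕ) < a ∨ b ≤ (k:ℕ)) → y k = 0) ∧ z = ∑ k, A.σ k (y k) with hP
  have start : P 0 (n+1) := by
    simp only [hP]
    obtain ⟨y, hy⟩ := (mem_Dsub_iff A z).1 hz
    exact ⟨y, fun k hk => absurd hk (by have := k.isLt; omega), hy⟩
  have stepA : ∀ m : ℕ, m ≤ n → (i:ℕ) ≤ m → P 0 (m+1) → P 0 m := by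
    intro m hm him hPm
    simp only [hP] at hPm ⊢
    obtain ⟨y, hy, hzy⟩ := hPm
    have hFi : (⟨m+1, by omega⟩ : Fin (n+2)) ≠ i := by
      intro e; rw [Fin.ext_iff] at e; simp only at e; omega
    have hface : A.δ (⟨m+1, by omega⟩ : Fin (n+2)) z = 0 := h0 _ hFi
    cases m with
    | zero =>
      refine ⟨y, fun k _ => ?_, hzy⟩
      rcases Nat.eq_zero_or_pos (k:ℕ) with hk0 | hk0
      · have hk : k = (⟨0, by omega⟩ : Fin (n+1)) := Fin.ext hk0
        rw [hzy, hom_sum (A.δ _)] at hface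
        rw [Finset.sum_eq_single (⟨0, by omega⟩ : Fin (n+1))] at hface
        · rw [hk]
          calc y ⟨0, by omega⟩
              = A.δ (⟨0+1, by omega⟩ : Fin (n+2)) (A.σ ⟨0, by omega⟩ (y ⟨0, by omega⟩)) :=
                (dσ_succ A ⟨0, by omega⟩ _).symm
            _ = 0 := hface
        · intro b _ hb
          have hb' : 1 ≤ (b:ℕ) := by
            rcases Nat.eq_zero_or_pos (b:ℕ) with h | h
            · exact absurd (Fin.ext h) hb
            · exact h
          rw [hy b (Or.inr hb'), map_zero (ConcreteCategory.hom (A.σ b)), map_zero (ConcreteCategory.hom (A.δ _))]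
        · intro h; exact absurd (Finset.mem_univ _) h
      · exact hy k (Or.inr hk0)
    | succ m' =>
      obtain ⟨n', rfl⟩ : ∃ n', n = n'+1 := ⟨n-1, by omega⟩
      set J : Fin (n'+2) := ⟨m'+1, by omega⟩ with hJ
      set F : Fin (n'+3) := ⟨m'+1+1, by omega⟩ with hF
      set Q : Fin (n'+1) := ⟨m', by omega⟩ with hQ
      set y' : Fin (n'+2) → A.obj (op ⦋n'+1⦌) :=
        fun k => if (k:ℕ) < m'+1 then y k - A.σ Q (A.δ J (y k)) else 0 with hy'
      have key : ∀ k : Fin (n'+2),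
          A.σ k (y k) - A.σ k (y' k) = A.σ J (A.δ F (A.σ k (y k))) := by
        intro k
        rcases Nat.lt_trichotomy (k:ℕ) (m'+1) with hk | hk | hk
        · have hklt : (k:ℕ) < n'+1 := by omega
          have e1 : y' k = y k - A.σ Q (A.δ J (y k)) := by
            simp only [hy']; rw [if_pos hk]
          calc A.σ k (y k) - A.σ k (y' k)
              = A.σ k (y k) - (A.σ k (y k) - A.σ k (A.σ Q (A.δ J (y k)))) := by
                rw [e1, map_sub (ConcreteCategory.hom (A.σ k))]
            _ = A.σ k (A.σ Q (A.δ J (y k))) := sub_sub_cancel _ _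
            _ = A.σ J (A.σ ⟨(k:ℕ), hklt⟩ (A.δ J (y k))) :=
                σσ A (i := ⟨(k:ℕ), hklt⟩) (j := Q) (by rw [Fin.le_def]; exact Nat.lt_succ_iff.1 hk) _
            _ = A.σ J (A.δ F (A.σ k (y k))) :=
                congrArg (A.σ J) (dσ_gt A (i := J) (j := ⟨(k:ℕ), hklt⟩)
                  (by rw [Fin.lt_def]; exact hk) (y k)).symm
        · have hkJ : k = J := Fin.ext hk
          have e0 : y' k = 0 := by simp only [hy']; rw [if_neg (by omega)]
          rw [e0, map_zero (ConcreteCategory.hom (A.σ k)), sub_zero, hkJ]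
          exact (congrArg (A.σ J) (dσ_succ A J (y J))).symm
        · have hyk : y k = 0 := hy k (Or.inr (by omega))
          rw [hyk]
          have e0 : y' k = 0 := by simp only [hy']; rw [if_neg (by omega)]
          rw [e0, map_zero (ConcreteCategory.hom (A.σ k)), map_zero (ConcreteCategory.hom (A.δ F)), map_zero (ConcreteCategory.hom (A.σ J)), sub_self]
      have hsum : (∑ k, A.σ k (y k)) - (∑ k, A.σ k (y' k))
          = A.σ J (A.δ F (∑ k, A.σ k (y k))) := by
        rw [hom_sum (A.δ F), hom_sum (A.σ J), ← Finset.sum_sub_distrib]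
        exact Finset.sum_congr rfl fun k _ => key k
      have hz' : z = ∑ k, A.σ k (y' k) := by
        have h2 : z - ∑ k, A.σ k (y' k) = A.σ J (A.δ F z) := by rw [hzy]; exact hsum
        rw [hface, map_zero (ConcreteCategory.hom (A.σ J)), sub_eq_zero] at h2
        exact h2
      refine ⟨y', fun k hk => ?_, hz'⟩
      rcases hk with hk | hk
      · omega
      · simp only [hy']; rw [if_neg (by omega)]

  have stepB : ∀ m : ℕ, m < (i:ℕ) → P m (i:ℕ) → P (m+1) (i:ℕ) := by
    intro m hmi hPm
    simp only [hP] at hPm ⊢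
    obtain ⟨y, hy, hzy⟩ := hPm
    have hmn : m ≤ n := by have := i.isLt; omega
    have hFi : (⟨m, by omega⟩ : Fin (n+2)) ≠ i := by
      intro e; rw [Fin.ext_iff] at e; simp only at e; omega
    have hface : A.δ (⟨m, by omega⟩ : Fin (n+2)) z = 0 := h0 _ hFi
    by_cases hmn' : m < n
    · obtain ⟨n', rfl⟩ : ∃ n', n = n'+1 := ⟨n-1, by omega⟩
      set KM : Fin (n'+2) := ⟨m, by omega⟩ with hKM
      set F : Fin (n'+3) := ⟨m, by omega⟩ with hF2
      set Q : Fin (n'+1) := ⟨m, by omega⟩ with hQ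
      set y' : Fin (n'+2) → A.obj (op ⦋n'+1⦌) :=
        fun k => if m < (k:ℕ) then y k - A.σ Q (A.δ KM (y k)) else 0 with hy'
      have hface' : A.δ F z = 0 := hface
      have key : ∀ k : Fin (n'+2),
          A.σ k (y k) - A.σ k (y' k) = A.σ KM (A.δ F (A.σ k (y k))) := by
        intro k
        rcases Nat.lt_trichotomy (k:ℕ) m with hk | hk | hk
        · have hyk : y k = 0 := hy k (Or.inl hk)
          have e0 : y' k = 0 := by simp only [hy']; rw [if_neg (by omega)]
          rw [hyk, e0, map_zero (ConcreteCategory.hom (A.σ k)), map_zero (ConcreteCategory.hom (A.δ F)), map_zero (ConcreteCategory.hom (A.σ KM)), sub_self]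
        · have hkKM : k = KM := Fin.ext hk
          have e0 : y' k = 0 := by simp only [hy']; rw [if_neg (by omega)]
          rw [e0, map_zero (ConcreteCategory.hom (A.σ k)), sub_zero, hkKM]
          exact (congrArg (A.σ KM) (dσ_self A KM (y KM))).symm
        · have e1 : y' k = y k - A.σ Q (A.δ KM (y k)) := by
            simp only [hy']; rw [if_pos hk]
          have hk1 : (k:ℕ) - 1 < n'+1 := by have := k.isLt; omega
          have hksucc : k = Fin.succ ⟨(k:ℕ)-1, hk1⟩ :=
            Fin.ext (by show (k:ℕ) = (k:ℕ)-1+1; omega)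
          rw [e1, map_sub (ConcreteCategory.hom (A.σ k)), sub_sub_cancel, hksucc]
          calc A.σ (Fin.succ ⟨(k:ℕ)-1, hk1⟩) (A.σ Q (A.δ KM (y (Fin.succ ⟨(k:ℕ)-1, hk1⟩))))
              = A.σ KM (A.σ ⟨(k:ℕ)-1, hk1⟩ (A.δ KM (y (Fin.succ ⟨(k:ℕ)-1, hk1⟩)))) :=
                (σσ A (i := Q) (j := ⟨(k:ℕ)-1, hk1⟩)
                  (by rw [Fin.le_def]; show m ≤ (k:ℕ)-1; omega) _).symm
            _ = A.σ KM (A.δ F (A.σ (Fin.succ ⟨(k:ℕ)-1, hk1⟩) (y (Fin.succ ⟨(k:ℕ)-1, hk1⟩)))) :=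
                congrArg (A.σ KM) (dσ_le A (i := KM) (j := ⟨(k:ℕ)-1, hk1⟩)
                  (by rw [Fin.le_def]; show m ≤ (k:ℕ)-1; omega) _).symm
      have hsum : (∑ k, A.σ k (y k)) - (∑ k, A.σ k (y' k))
          = A.σ KM (A.δ F (∑ k, A.σ k (y k))) := by
        rw [hom_sum (A.δ F), hom_sum (A.σ KM), ← Finset.sum_sub_distrib]
        exact Finset.sum_congr rfl fun k _ => key k
      have hz' : z = ∑ k, A.σ k (y' k) := by
        have h2 : z - ∑ k, A.σ k (y' k) = A.σ KM (A.δ F z) := by rw [hzy]; exact hsum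
        rw [hface', map_zero (ConcreteCategory.hom (A.σ KM)), sub_eq_zero] at h2
        exact h2
      refine ⟨y', fun k hk => ?_, hz'⟩
      rcases hk with hk | hk
      · simp only [hy']; rw [if_neg (by omega)]
      · simp only [hy']
        rw [hy k (Or.inr hk), map_zero (ConcreteCategory.hom (A.δ KM)), map_zero (ConcreteCategory.hom (A.σ Q)), sub_zero, ite_self]
    · -- m = n
      have hmn2 : m = n := by omega
      refine ⟨y, fun k _ => ?_, hzy⟩
      rcases Nat.lt_or_ge (k:ℕ) m with hk | hk
      · exact hy k (Or.inl hk)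
      · have hkm : (k:ℕ) = m := by have := k.isLt; omega
        have hkKM : k = (⟨m, by omega⟩ : Fin (n+1)) := Fin.ext hkm
        rw [hzy, hom_sum (A.δ _)] at hface
        rw [Finset.sum_eq_single (⟨m, by omega⟩ : Fin (n+1))] at hface
        · rw [hkKM]
          calc y ⟨m, by omega⟩
              = A.δ (⟨m, by omega⟩ : Fin (n+2)) (A.σ ⟨m, by omega⟩ (y ⟨m, by omega⟩)) :=
                (dσ_self A ⟨m, by omega⟩ _).symm
            _ = 0 := hface
        · intro b _ hb
          have hb' : (b:ℕ) < m := by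
            have := b.isLt
            rcases Nat.lt_or_ge (b:ℕ) m with h | h
            · exact h
            · exact absurd (Fin.ext (by omega)) hb
          rw [hy b (Or.inl hb'), map_zero (ConcreteCategory.hom (A.σ b)), map_zero (ConcreteCategory.hom (A.δ _))]
        · intro h; exact absurd (Finset.mem_univ _) h
  have down : ∀ d : ℕ, (i:ℕ) + d ≤ n+1 → P 0 ((i:ℕ) + d) → P 0 (i:ℕ) := by
    intro d
    induction d with
    | zero => intro _ h; exact h
    | succ d ih => intro hle h; exact ih (by omega) (stepA ((i:ℕ)+d) (by omega) (by omega) h)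
  have up : ∀ d : ℕ, d ≤ (i:ℕ) → P ((i:ℕ) - d) (i:ℕ) → P (i:ℕ) (i:ℕ) := by
    intro d
    induction d with
    | zero => intro _ h; exact h
    | succ d ih =>
      intro hd h
      have h2 := stepB ((i:ℕ) - (d+1)) (by omega) h
      have e : (i:ℕ) - (d+1) + 1 = (i:ℕ) - d := by omega
      rw [e] at h2
      exact ih (by omega) h2
  have hP0i : P 0 (i:ℕ) := by
    have e : (i:ℕ) + (n+1 - (i:ℕ)) = n+1 := by have := i.isLt; omega
    exact down (n+1 - (i:ℕ)) (by omega) (by rw [e]; exact start)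
  have hPii : P (i:ℕ) (i:ℕ) := by
    have e : (i:ℕ) - (i:ℕ) = 0 := by omega
    exact up (i:ℕ) le_rfl (by rw [e]; exact hP0i)
  simp only [hP] at hPii
  obtain ⟨y, hy, hzy⟩ := hPii
  rw [hzy, Finset.sum_eq_zero]
  intro k _
  rw [hy k (by omega), map_zero (ConcreteCategory.hom (A.σ k))]
lemma xcongr {α : Type*} {c : ℕ} {i : Fin c} (x : ∀ j : Fin c, j ≠ i → α)
    {j j' : Fin c} (h : j = j') (hj : j ≠ i) (hj' : j' ≠ i) : x j hj = x j' hj' := by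
  subst h; rfl

lemma δσ_mem {N : ℕ} (T : AddSubgroup (A.obj (op ⦋N+1⦌)))
    (hT : ∀ (k : Fin (N+1)) (u : A.obj (op ⦋N⦌)), A.σ k u ∈ T)
    (j : Fin (N+3)) (q : Fin (N+2)) (v : A.obj (op ⦋N+1⦌)) (hv : v ∈ T) :
    A.δ j (A.σ q v) ∈ T := by
  rcases Nat.lt_trichotomy (j:ℕ) (q:ℕ) with h | h | h
  · have hq1 : (q:ℕ) - 1 < N+1 := by have := q.isLt; omega
    have hj1 : (j:ℕ) < N+2 := by have := q.isLt; omega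
    have hq : q = Fin.succ ⟨(q:ℕ)-1, hq1⟩ := Fin.ext (by show (q:ℕ) = (q:ℕ)-1+1; omega)
    have e2 : A.δ j (A.σ q v) = A.σ ⟨(q:ℕ)-1, hq1⟩ (A.δ ⟨(j:ℕ), hj1⟩ v) := by
      conv_lhs => rw [hq]
      exact dσ_le A (i := ⟨(j:ℕ), hj1⟩) (j := ⟨(q:ℕ)-1, hq1⟩)
        (by rw [Fin.le_def]; show (j:ℕ) ≤ (q:ℕ)-1; omega) v
    rw [e2]; exact hT _ _
  · have hjq : j = q.castSucc := Fin.ext h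
    rw [hjq, dσ_self A q v]; exact hv
  · rcases Nat.eq_or_lt_of_le h with h' | h'
    · have hjq : j = q.succ := Fin.ext (by simpa using h'.symm)
      rw [hjq, dσ_succ A q v]; exact hv
    · have hj1 : (j:ℕ) - 1 < N+2 := by have := j.isLt; omega
      have hq1 : (q:ℕ) < N+1 := by have := j.isLt; omega
      have hj : j = Fin.succ ⟨(j:ℕ)-1, hj1⟩ := Fin.ext (by show (j:ℕ) = (j:ℕ)-1+1; omega)
      have e2 : A.δ j (A.σ q v) = A.σ ⟨(q:ℕ), hq1⟩ (A.δ ⟨(j:ℕ)-1, hj1⟩ v) := by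
        conv_lhs => rw [hj]
        exact dσ_gt A (i := ⟨(j:ℕ)-1, hj1⟩) (j := ⟨(q:ℕ), hq1⟩)
          (by rw [Fin.lt_def]; show (q:ℕ) < (j:ℕ)-1; omega) v
      rw [e2]; exact hT _ _

lemma fill₀ (i : Fin 2) (x : ∀ j : Fin 2, j ≠ i → A.obj (op ⦋0⦌)) :
    ∃ w : A.obj (op ⦋1⦌), w ∈ Dsub A 0 ∧ ∀ (j : Fin 2) (hj : j ≠ i), A.δ j w = x j hj := by
  fin_cases i
  · have h1 : (1 : Fin 2) ≠ 0 := by decide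
    refine ⟨A.σ 0 (x 1 h1), σ_mem_Dsub A 0 _, ?_⟩
    intro j hj
    fin_cases j
    · exact absurd rfl hj
    · calc A.δ 1 (A.σ 0 (x 1 h1)) = x 1 h1 := dσ_succ A 0 _
        _ = _ := rfl
  · have h0 : (0 : Fin 2) ≠ 1 := by decide
    refine ⟨A.σ 0 (x 0 h0), σ_mem_Dsub A 0 _, ?_⟩
    intro j hj
    fin_cases j
    · calc A.δ 0 (A.σ 0 (x 0 h0)) = x 0 h0 := dσ_self A 0 _
        _ = _ := rfl
    · exact absurd rfl hj
set_option maxHeartbeats 1000000 in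
lemma fill_main {N : ℕ} (i : Fin (N+3)) (x : ∀ j : Fin (N+3), j ≠ i → A.obj (op ⦋N+1⦌))
    (compat : ∀ (a b : Fin (N+2)), a ≤ b → ∀ (ha : a.castSucc ≠ i) (hb : b.succ ≠ i),
      A.δ a (x b.succ hb) = A.δ b (x a.castSucc ha))
    (T : AddSubgroup (A.obj (op ⦋N+1⦌)))
    (hT : ∀ (k : Fin (N+1)) (u : A.obj (op ⦋N⦌)), A.σ k u ∈ T)
    (hxT : ∀ j hj, x j hj ∈ T) :
    ∃ w : A.obj (op ⦋N+2⦌), w ∈ Dsub A (N+1) ∧ (∀ j hj, A.δ j w = x j hj) ∧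
      ∀ j : Fin (N+3), A.δ j w ∈ T := by
  have up : ∀ m : ℕ, m ≤ (i:ℕ) → ∃ w : A.obj (op ⦋N+2⦌), w ∈ Dsub A (N+1) ∧
      (∀ (j : Fin (N+3)) (hj : j ≠ i), (j:ℕ) < m → A.δ j w = x j hj) ∧
      (∀ j : Fin (N+3), A.δ j w ∈ T) := by
    intro m
    induction m with
    | zero =>
      intro _
      refine ⟨0, zero_mem _, fun j hj h => absurd h (by omega), fun j => ?_⟩
      rw [map_zero (ConcreteCategory.hom (A.δ j))]; exact zero_mem T
    | succ m ih =>
      intro hm1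
      obtain ⟨w, hwD, hwf, hwT⟩ := ih (by omega)
      have hmN : m < N+2 := by have := i.isLt; omega
      set KM : Fin (N+2) := ⟨m, hmN⟩ with hKM
      set FM : Fin (N+3) := ⟨m, by omega⟩ with hFM
      have hFi : FM ≠ i := by
        intro e; rw [Fin.ext_iff] at e; simp only [hFM] at e; omega
      set v : A.obj (op ⦋N+1⦌) := A.δ FM w - x FM hFi with hv
      set w' := w - A.σ KM v with hw'
      have hvT : v ∈ T := by rw [hv]; exact sub_mem (hwT FM) (hxT FM hFi)
      have hsub : ∀ j : Fin (N+3), A.δ j w' = A.δ j w - A.δ j (A.σ KM v) := by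
        intro j; rw [hw']; exact map_sub (ConcreteCategory.hom (A.δ j)) _ _
      refine ⟨w', sub_mem hwD (σ_mem_Dsub A KM v), ?_, ?_⟩
      · intro j hj hjm
        rcases Nat.lt_or_ge (j:ℕ) m with hjm' | hjm'
        · have hmm : m - 1 < N+1 := by omega
          have hjN2 : (j:ℕ) < N+2 := by omega
          have hKMsucc : KM = Fin.succ ⟨m-1, hmm⟩ := Fin.ext (by show m = m-1+1; omega)
          have e2 : A.δ j (A.σ KM v) = A.σ ⟨m-1, hmm⟩ (A.δ ⟨(j:ℕ), hjN2⟩ v) := by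
            conv_lhs => rw [hKMsucc]
            exact dσ_le A (i := ⟨(j:ℕ), hjN2⟩) (j := ⟨m-1, hmm⟩)
              (by rw [Fin.le_def]; show (j:ℕ) ≤ m-1; omega) v
          have hmm2 : m - 1 < N+2 := by omega
          have hFMsucc : FM = Fin.succ ⟨m-1, hmm2⟩ := Fin.ext (by show m = m-1+1; omega)
          have hbne : (Fin.succ (⟨m-1, hmm2⟩ : Fin (N+2))) ≠ i := by rw [← hFMsucc]; exact hFi
          have hδδ : A.δ (⟨(j:ℕ), hjN2⟩ : Fin (N+2)) (A.δ FM w)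
              = A.δ (⟨m-1, hmm2⟩ : Fin (N+2)) (x j hj) := by
            conv_lhs => rw [hFMsucc]
            calc A.δ (⟨(j:ℕ), hjN2⟩ : Fin (N+2)) (A.δ (Fin.succ ⟨m-1, hmm2⟩) w)
                = A.δ (⟨m-1, hmm2⟩ : Fin (N+2)) (A.δ (Fin.castSucc ⟨(j:ℕ), hjN2⟩) w) :=
                  dd_s5 A (i := ⟨(j:ℕ), hjN2⟩) (j := ⟨m-1, hmm2⟩)
                    (by rw [Fin.le_def]; show (j:ℕ) ≤ m-1; omega) w
              _ = A.δ (⟨m-1, hmm2⟩ : Fin (N+2)) (x j hj) := congrArg _ (hwf j hj hjm')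
          have hδx : A.δ (⟨(j:ℕ), hjN2⟩ : Fin (N+2)) (x FM hFi)
              = A.δ (⟨m-1, hmm2⟩ : Fin (N+2)) (x j hj) := by
            calc A.δ (⟨(j:ℕ), hjN2⟩ : Fin (N+2)) (x FM hFi)
                = A.δ (⟨(j:ℕ), hjN2⟩ : Fin (N+2)) (x (Fin.succ ⟨m-1, hmm2⟩) hbne) :=
                  congrArg _ (xcongr x hFMsucc hFi hbne)
              _ = A.δ (⟨m-1, hmm2⟩ : Fin (N+2)) (x (Fin.castSucc ⟨(j:ℕ), hjN2⟩) hj) :=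
                  compat ⟨(j:ℕ), hjN2⟩ ⟨m-1, hmm2⟩
                    (by rw [Fin.le_def]; show (j:ℕ) ≤ m-1; omega) hj hbne
              _ = A.δ (⟨m-1, hmm2⟩ : Fin (N+2)) (x j hj) := rfl
          have hδv : A.δ (⟨(j:ℕ), hjN2⟩ : Fin (N+2)) v = 0 := by
            rw [hv, map_sub (ConcreteCategory.hom (A.δ _)), hδδ, hδx, sub_self]
          rw [hsub j, e2, hδv, map_zero (ConcreteCategory.hom (A.σ _)), sub_zero]
          exact hwf j hj hjm'
        · have hjFM : j = FM := Fin.ext (by show (j:ℕ) = m; omega)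
          have e3 : A.δ j (A.σ KM v) = v := by
            rw [hjFM]; exact dσ_self A KM v
          rw [hsub j, e3, hv]
          have e4 : A.δ j w = A.δ FM w := by rw [hjFM]
          rw [e4, sub_sub_cancel]
          exact xcongr x hjFM.symm hFi hj
      · intro j
        rw [hsub j]
        exact sub_mem (hwT j) (δσ_mem A T hT j KM v hvT)
  have down : ∀ d : ℕ, d ≤ N+2-(i:ℕ) → ∃ w : A.obj (op ⦋N+2⦌), w ∈ Dsub A (N+1) ∧
      (∀ (j : Fin (N+3)) (hj : j ≠ i), (j:ℕ) < (i:ℕ) → A.δ j w = x j hj) ∧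
      (∀ (j : Fin (N+3)) (hj : j ≠ i), N+3-d ≤ (j:ℕ) → A.δ j w = x j hj) ∧
      (∀ j : Fin (N+3), A.δ j w ∈ T) := by
    intro d
    induction d with
    | zero =>
      intro _
      obtain ⟨w, hwD, hwf, hwT⟩ := up (i:ℕ) le_rfl
      exact ⟨w, hwD, fun j hj hji => hwf j hj hji,
        fun j hj h => absurd h (by have := j.isLt; omega), hwT⟩
    | succ d ih =>
      intro hd
      obtain ⟨w, hwD, hlow, hhigh, hwT⟩ := ih (by omega)
      set M : ℕ := N+2-d with hM
      have hiM : (i:ℕ) < M := by omega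
      have hM2 : M ≤ N+2 := by omega
      set QM : Fin (N+2) := ⟨M-1, by omega⟩ with hQM
      set FM : Fin (N+3) := ⟨M, by omega⟩ with hFM
      have hFi : FM ≠ i := by
        intro e; rw [Fin.ext_iff] at e; simp only [hFM] at e; omega
      have hFMsucc : FM = Fin.succ QM := Fin.ext (by show M = M-1+1; omega)
      set v : A.obj (op ⦋N+1⦌) := A.δ FM w - x FM hFi with hv
      set w' := w - A.σ QM v with hw'
      have hvT : v ∈ T := by rw [hv]; exact sub_mem (hwT FM) (hxT FM hFi)
      have hsub : ∀ j : Fin (N+3), A.δ j w' = A.δ j w - A.δ j (A.σ QM v) := by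
        intro j; rw [hw']; exact map_sub (ConcreteCategory.hom (A.δ j)) _ _
      refine ⟨w', sub_mem hwD (σ_mem_Dsub A QM v), ?_, ?_, ?_⟩
      · -- low faces j < i
        intro j hj hji
        have hjN2 : (j:ℕ) < N+2 := by omega
        have hMM : M-2 < N+1 := by omega
        have hQMsucc : QM = Fin.succ ⟨M-2, hMM⟩ := Fin.ext (by show M-1 = M-2+1; omega)
        have e2 : A.δ j (A.σ QM v) = A.σ ⟨M-2, hMM⟩ (A.δ ⟨(j:ℕ), hjN2⟩ v) := by
          conv_lhs => rw [hQMsucc]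
          exact dσ_le A (i := ⟨(j:ℕ), hjN2⟩) (j := ⟨M-2, hMM⟩)
            (by rw [Fin.le_def]; show (j:ℕ) ≤ M-2; omega) v
        have hδδ : A.δ (⟨(j:ℕ), hjN2⟩ : Fin (N+2)) (A.δ FM w) = A.δ QM (x j hj) := by
          conv_lhs => rw [hFMsucc]
          calc A.δ (⟨(j:ℕ), hjN2⟩ : Fin (N+2)) (A.δ (Fin.succ QM) w)
              = A.δ QM (A.δ (Fin.castSucc ⟨(j:ℕ), hjN2⟩) w) :=
                dd_s5 A (i := ⟨(j:ℕ), hjN2⟩) (j := QM)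
                  (by rw [Fin.le_def]; show (j:ℕ) ≤ M-1; omega) w
            _ = A.δ QM (x j hj) := congrArg _ (hlow j hj hji)
        have hbne : Fin.succ QM ≠ i := by rw [← hFMsucc]; exact hFi
        have hδx : A.δ (⟨(j:ℕ), hjN2⟩ : Fin (N+2)) (x FM hFi) = A.δ QM (x j hj) := by
          calc A.δ (⟨(j:ℕ), hjN2⟩ : Fin (N+2)) (x FM hFi)
              = A.δ (⟨(j:ℕ), hjN2⟩ : Fin (N+2)) (x (Fin.succ QM) hbne) :=
                congrArg _ (xcongr x hFMsucc hFi hbne)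
            _ = A.δ QM (x (Fin.castSucc ⟨(j:ℕ), hjN2⟩) hj) :=
                compat ⟨(j:ℕ), hjN2⟩ QM
                  (by rw [Fin.le_def]; show (j:ℕ) ≤ M-1; omega) hj hbne
            _ = A.δ QM (x j hj) := rfl
        have hδv : A.δ (⟨(j:ℕ), hjN2⟩ : Fin (N+2)) v = 0 := by
          rw [hv, map_sub (ConcreteCategory.hom (A.δ _)), hδδ, hδx, sub_self]
        rw [hsub j, e2, hδv, map_zero (ConcreteCategory.hom (A.σ _)), sub_zero]
        exact hlow j hj hji
      · -- high faces N+3-(d+1) ≤ j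
        intro j hj hjM
        rcases Nat.lt_or_ge M (j:ℕ) with hjM' | hjM'
        · have hj1 : (j:ℕ)-1 < N+2 := by have := j.isLt; omega
          have hMN1 : M-1 < N+1 := by have := j.isLt; omega
          have hjsucc : j = Fin.succ ⟨(j:ℕ)-1, hj1⟩ := Fin.ext (by show (j:ℕ) = (j:ℕ)-1+1; omega)
          have e2 : A.δ j (A.σ QM v) = A.σ ⟨M-1, hMN1⟩ (A.δ ⟨(j:ℕ)-1, hj1⟩ v) := by
            conv_lhs => rw [hjsucc]
            exact dσ_gt A (i := ⟨(j:ℕ)-1, hj1⟩) (j := ⟨M-1, hMN1⟩)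
              (by rw [Fin.lt_def]; show M-1 < (j:ℕ)-1; omega) v
          have hMN2 : M < N+2 := by have := j.isLt; omega
          have hδδ : A.δ (⟨(j:ℕ)-1, hj1⟩ : Fin (N+2)) (A.δ FM w)
              = A.δ (⟨M, hMN2⟩ : Fin (N+2)) (x j hj) := by
            calc A.δ (⟨(j:ℕ)-1, hj1⟩ : Fin (N+2)) (A.δ FM w)
                = A.δ (⟨M, hMN2⟩ : Fin (N+2)) (A.δ (Fin.succ ⟨(j:ℕ)-1, hj1⟩) w) :=
                  (dd_s5 A (i := ⟨M, hMN2⟩) (j := ⟨(j:ℕ)-1, hj1⟩)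
                    (by rw [Fin.le_def]; show M ≤ (j:ℕ)-1; omega) w).symm
              _ = A.δ (⟨M, hMN2⟩ : Fin (N+2)) (A.δ j w) := by rw [← hjsucc]
              _ = A.δ (⟨M, hMN2⟩ : Fin (N+2)) (x j hj) :=
                  congrArg _ (hhigh j hj (by omega))
          have hbne2 : Fin.succ (⟨(j:ℕ)-1, hj1⟩ : Fin (N+2)) ≠ i := by
            rw [← hjsucc]; exact hj
          have hδx : A.δ (⟨(j:ℕ)-1, hj1⟩ : Fin (N+2)) (x FM hFi)
              = A.δ (⟨M, hMN2⟩ : Fin (N+2)) (x j hj) := by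
            calc A.δ (⟨(j:ℕ)-1, hj1⟩ : Fin (N+2)) (x FM hFi)
                = A.δ (⟨M, hMN2⟩ : Fin (N+2)) (x (Fin.succ ⟨(j:ℕ)-1, hj1⟩) hbne2) :=
                  (compat ⟨M, hMN2⟩ ⟨(j:ℕ)-1, hj1⟩
                    (by rw [Fin.le_def]; show M ≤ (j:ℕ)-1; omega) hFi hbne2).symm
              _ = A.δ (⟨M, hMN2⟩ : Fin (N+2)) (x j hj) :=
                  congrArg _ (xcongr x (j := Fin.succ ⟨(j:ℕ)-1, hj1⟩) (j' := j)
                    hjsucc.symm hbne2 hj)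
          have hδv : A.δ (⟨(j:ℕ)-1, hj1⟩ : Fin (N+2)) v = 0 := by
            rw [hv, map_sub (ConcreteCategory.hom (A.δ _)), hδδ, hδx, sub_self]
          rw [hsub j, e2, hδv, map_zero (ConcreteCategory.hom (A.σ _)), sub_zero]
          exact hhigh j hj (by omega)
        · have hjFM : j = FM := Fin.ext (by show (j:ℕ) = M; omega)
          have e3 : A.δ j (A.σ QM v) = v := by
            rw [hjFM]
            conv_lhs => rw [hFMsucc]
            exact dσ_succ A QM v
          rw [hsub j, e3, hv]
          have e4 : A.δ j w = A.δ FM w := by rw [hjFM]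
          rw [e4, sub_sub_cancel]
          exact xcongr x hjFM.symm hFi hj
      · intro j
        rw [hsub j]
        exact sub_mem (hwT j) (δσ_mem A T hT j QM v hvT)
  obtain ⟨w, hwD, hlow, hhigh, hwT⟩ := down (N+2-(i:ℕ)) le_rfl
  refine ⟨w, hwD, fun j hj => ?_, hwT⟩
  rcases Nat.lt_trichotomy (j:ℕ) (i:ℕ) with h | h | h
  · exact hlow j hj h
  · exact absurd (Fin.ext h) hj
  · exact hhigh j hj (by have := i.isLt; omega)
lemma horn_compat {X : SSet} {N : ℕ} {i : Fin (N+3)} (h : (Λ[N+2, i] : SSet) ⟶ X)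
    (a b : Fin (N+2)) (hab : a ≤ b) (ha : a.castSucc ≠ i) (hb : b.succ ≠ i) :
    X.δ a (h.app (op ⦋N+1⦌) (horn.face i b.succ hb))
      = X.δ b (h.app (op ⦋N+1⦌) (horn.face i a.castSucc ha)) := by
  have e1 : (Λ[N+2, i] : SSet).map (SimplexCategory.δ a).op (horn.face i b.succ hb)
      = (Λ[N+2, i] : SSet).map (SimplexCategory.δ b).op (horn.face i a.castSucc ha) := by
    apply Subtype.ext
    apply stdSimplex.objEquiv.injective
    change SimplexCategory.δ a ≫ SimplexCategory.δ b.succ = SimplexCategory.δ b ≫ SimplexCategory.δ a.castSucc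
    exact SimplexCategory.δ_comp_δ hab
  calc X.δ a (h.app (op ⦋N+1⦌) (horn.face i b.succ hb))
      = h.app (op ⦋N⦌) ((Λ[N+2, i] : SSet).map (SimplexCategory.δ a).op (horn.face i b.succ hb)) :=
        (NatTrans.naturality_apply h (SimplexCategory.δ a).op _).symm
    _ = h.app (op ⦋N⦌) ((Λ[N+2, i] : SSet).map (SimplexCategory.δ b).op (horn.face i a.castSucc ha)) :=
        congrArg _ e1
    _ = X.δ b (h.app (op ⦋N+1⦌) (horn.face i a.castSucc ha)) :=
        NatTrans.naturality_apply h (SimplexCategory.δ b).op _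

end Aux

/-- a simplicial abelian group `A` becomes a simplicial T-complex when a
simplex is declared thin if and only if it is a sum of degenerate simplices (i.e. lies
in the subgroup generated by the degenerate simplices): every degenerate simplex is
thin, every horn has a unique thin filler, and thin fillers of horns with all thin
faces have thin remaining face. -/
theorem simplicial_abelian_group_is_TComplex (A : SimplicialObject AddCommGrpCat) :
    ∃ T : TComplexStruct (toSSet.obj A),
      ∀ (n : ℕ) (x : (toSSet.obj A) _⦋n + 1⦌),
        T.thin x ↔ x ∈ AddSubgroup.closure
          (setOf fun a : A.obj (op ⦋n + 1⦌) => ∃ (i : Fin (n + 1)) (y : A.obj (op ⦋n⦌)), A.σ i y = a) := by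
  refine ⟨⟨fun n x => x ∈ Dsub A n, ?_, ?_, ?_⟩, fun n x => Iff.rfl⟩
  · -- every degenerate simplex is thin
    intro n x hx
    obtain ⟨k, y, rfl⟩ := hx
    exact σ_mem_Dsub A k y
  · -- unique thin filler for every horn
    intro n i h
    have main : ∃ w : A.obj (op ⦋n+1⦌), w ∈ Dsub A n ∧
        ∀ (j : Fin (n+2)) (hj : j ≠ i), A.δ j w = h.app (op ⦋n⦌) (horn.face i j hj) := by
      cases n with
      | zero => exact fill₀ A i fun j hj => h.app (op ⦋0⦌) (horn.face i j hj)
      | succ N =>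
        obtain ⟨w, hD, hf, -⟩ := fill_main A i
          (fun j hj => h.app (op ⦋N+1⦌) (horn.face i j hj))
          (fun a b hab ha hb => horn_compat h a b hab ha hb) ⊤
          (fun _ _ => AddSubgroup.mem_top _) (fun _ _ => AddSubgroup.mem_top _)
        exact ⟨w, hD, hf⟩
    obtain ⟨w, hD, hf⟩ := main
    refine ⟨w, ⟨hD, fun j hj => hf j hj⟩, ?_⟩
    rintro y ⟨hyD, hyf⟩
    have hzero : ∀ (j : Fin (n+2)), j ≠ i → A.δ j ((show A.obj (op ⦋n+1⦌) from y) - w) = 0 := by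
      intro j hj
      have e1 : A.δ j (show A.obj (op ⦋n+1⦌) from y) = h.app (op ⦋n⦌) (horn.face i j hj) := hyf j hj
      have e2 : A.δ j w = h.app (op ⦋n⦌) (horn.face i j hj) := hf j hj
      rw [map_sub (ConcreteCategory.hom (A.δ j)), e1, e2]; exact sub_self _
    have hyw : (show A.obj (op ⦋n+1⦌) from y) = w := sub_eq_zero.1
      (zero_of_faces A n i ((show A.obj (op ⦋n+1⦌) from y) - w) (sub_mem hyD hD) hzero)
    exact hyw
  · -- thin filler of a horn with thin faces has thin remaining face
    intro n x i hx hfaces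
    obtain ⟨w, hD, hf, hT⟩ := fill_main A i (fun j _ => A.δ j (show A.obj (op ⦋n+2⦌) from x))
      (fun a b hab ha hb => dd_s5 A hab x) (Dsub A n)
      (fun k u => σ_mem_Dsub A k u) (fun j hj => hfaces j hj)
    have hzero : ∀ (j : Fin (n+3)), j ≠ i → A.δ j ((show A.obj (op ⦋n+2⦌) from x) - w) = 0 := by
      intro j hj
      rw [map_sub (ConcreteCategory.hom (A.δ j)), hf j hj]
      exact sub_self _
    have hxw : (show A.obj (op ⦋n+2⦌) from x) = w :=
      sub_eq_zero.1
        (zero_of_faces A (n+1) i ((show A.obj (op ⦋n+2⦌) from x) - w) (sub_mem hx hD) hzero)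
    have hfin : A.δ i (show A.obj (op ⦋n+2⦌) from x) ∈ Dsub A n := by
      rw [hxw]; exact hT i
    exact hfin

end Strict
end

section
/- An algebraic Kan complex X is a simplicial T-complex with thin simplices the distinguished fillers if and only if X has no two distinct co-thin simplices. -/
open CategoryTheory Simplicial SSet Opposite

namespace Strict


/-- An algebraic Kan complex (Nikolaus): a simplicial set together with a chosen filler
for every horn. -/
structure AlgKan where
  X : SSet
  fill : ∀ {n : ℕ} (i : Fin (n + 2)) (h : (Λ[n + 1, i] : SSet) ⟶ X), X _⦋n + 1⦌
  fill_spec : ∀ {n : ℕ} (i : Fin (n + 2)) (h : (Λ[n + 1, i] : SSet) ⟶ X), Fills X h (fill i h)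

/-- A morphism of algebraic Kan complexes: a simplicial map commuting with the chosen
fillers. -/
structure AlgKanHom (K L : AlgKan) where
  map : K.X ⟶ L.X
  fill_comm : ∀ {n : ℕ} (i : Fin (n + 2)) (h : (Λ[n + 1, i] : SSet) ⟶ K.X),
    map.app (op ⦋n + 1⦌) (K.fill i h) = L.fill i (h ≫ map)

/-- The identity morphism of algebraic Kan complexes. -/
def AlgKanHom.id (K : AlgKan) : AlgKanHom K K where
  map := 𝟙 K.X
  fill_comm := by intro n i h; simp only [Category.comp_id]; rfl

/-- Composition of morphisms of algebraic Kan complexes. -/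
def AlgKanHom.comp {K L M : AlgKan} (f : AlgKanHom K L) (g : AlgKanHom L M) :
    AlgKanHom K M where
  map := f.map ≫ g.map
  fill_comm := by
    intro n i h
    show g.map.app _ (f.map.app _ (K.fill i h)) = _
    rw [f.fill_comm, g.fill_comm, Category.assoc]

/-- The thin simplices of an algebraic Kan complex, generated inductively: degenerate
simplices are thin, distinguished (chosen) fillers are thin, and the composition of a
horn all of whose faces are thin (the remaining face of its distinguished filler) is
thin. -/
inductive Thin (K : AlgKan) : ∀ {n : ℕ}, K.X _⦋n + 1⦌ → Prop
| degen {n : ℕ} (x : K.X _⦋n + 1⦌) : IsDegenerate K.X x → Thin K x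
| filler {n : ℕ} (i : Fin (n + 2)) (h : (Λ[n + 1, i] : SSet) ⟶ K.X) : Thin K (K.fill i h)
| comp {n : ℕ} (i : Fin (n + 3)) (h : (Λ[n + 2, i] : SSet) ⟶ K.X) :
      (∀ (j : Fin (n + 3)), j ≠ i → Thin K (K.X.δ j (K.fill i h))) →
      Thin K (K.X.δ i (K.fill i h))

/-- Two thin simplices are co-thin if they fill a common horn. -/
def CoThin (K : AlgKan) {n : ℕ} (x y : K.X _⦋n + 1⦌) : Prop :=
  Thin K x ∧ Thin K y ∧ ∃ i : Fin (n + 2), ∀ j : Fin (n + 2), j ≠ i → K.X.δ j x = K.X.δ j y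


/-- The horn determined by the faces of a simplex. -/
def hornOf (X : SSet) {n : ℕ} (i : Fin (n + 2)) (x : X _⦋n + 1⦌) : (Λ[n + 1, i] : SSet) ⟶ X :=
  Λ[n + 1, i].ι ≫ yonedaEquiv.symm x

lemma hornOf_face (X : SSet) {n : ℕ} (i : Fin (n + 2)) (x : X _⦋n + 1⦌)
    (j : Fin (n + 2)) (hj : j ≠ i) :
    (hornOf X i x).app (op ⦋n⦌) (horn.face i j hj) = X.δ j x := rfl

lemma fills_hornOf (X : SSet) {n : ℕ} (i : Fin (n + 2)) (x : X _⦋n + 1⦌) :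
    Fills X (hornOf X i x) x := fun _ _ => rfl

/-- an algebraic Kan complex is a simplicial T-complex, with thin simplices
the (inductively generated) distinguished fillers, if and only if it has no two distinct
co-thin simplices. -/
theorem tComplex_iff_no_distinct_cothin (K : AlgKan) :
    (∃ T : TComplexStruct K.X, ∀ (n : ℕ) (x : K.X _⦋n + 1⦌), T.thin x ↔ Thin K x) ↔
    (∀ (n : ℕ) (x y : K.X _⦋n + 1⦌), CoThin K x y → x = y) := by
  constructor
  · rintro ⟨T, hT⟩ n x y ⟨hx, hy, i, hfaces⟩
    obtain ⟨z, _, huniq⟩ := T.fill_existsUnique i (hornOf K.X i x)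
    have h1 : x = z := huniq x ⟨(hT n x).2 hx, fills_hornOf K.X i x⟩
    have h2 : y = z := huniq y ⟨(hT n y).2 hy, fun j hj => by
      rw [hornOf_face, ← hfaces j hj]⟩
    rw [h1, h2]
  · intro H
    refine ⟨⟨fun _ x => Thin K x, fun x hx => Thin.degen x hx, ?_, ?_⟩,
      fun n x => Iff.rfl⟩
    · intro n i h
      refine ⟨K.fill i h, ⟨Thin.filler i h, K.fill_spec i h⟩, ?_⟩
      rintro y ⟨hy, hfy⟩
      exact H n y (K.fill i h) ⟨hy, Thin.filler i h, i, fun j hj => by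
        rw [hfy j hj, K.fill_spec i h j hj]⟩
    · intro n x i hx hfaces
      have hx' : x = K.fill i (hornOf K.X i x) := by
        refine H _ x _ ⟨hx, Thin.filler i _, i, fun j hj => ?_⟩
        rw [fills_hornOf K.X i x j hj, K.fill_spec i (hornOf K.X i x) j hj]
      rw [hx']
      exact Thin.comp i (hornOf K.X i x) (fun j hj => hx' ▸ hfaces j hj)

end Strict
end

section
/- If X is an n-skeletal simplicial set, then the strictification St(X) is an (n+1)-coskeletal simplicial set: every map ∂Δᴺ → St(X) with N ≥ n+2 extends uniquely to Δᴺ. -/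
open CategoryTheory Simplicial SSet Opposite

namespace Strict


/-- An algebraic Kan complex has no two distinct co-thin simplices. -/
def NoDistinctCoThin (K : AlgKan) : Prop :=
  ∀ (n : ℕ) (x y : K.X _⦋n + 1⦌), CoThin K x y → x = y
section Machinery

open SimplexCategory

theorem AlgKanHom.ext' {K L : AlgKan} {f g : AlgKanHom K L} (h : f.map = g.map) : f = g := by
  cases f; cases g; cases h; rfl

/-- Swapping two face maps so that the second one avoids a given index. -/
lemma delta_swap (c : ℕ) (l : Fin (c + 2)) (i : Fin (c + 3)) :
    ∃ (a : Fin (c + 2)) (b : Fin (c + 3)), b ≠ i ∧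
      (SimplexCategory.δ l ≫ SimplexCategory.δ i :
        (⦋c⦌ : SimplexCategory) ⟶ ⦋c + 2⦌) = SimplexCategory.δ a ≫ SimplexCategory.δ b := by
  rcases lt_or_ge l.castSucc i with hli | hil
  · have hi0 : i ≠ 0 := by
      intro h
      rw [h] at hli
      exact Fin.not_lt_zero _ hli
    refine ⟨i.pred hi0, l.castSucc, ?_, ?_⟩
    · exact Fin.ne_of_lt hli
    · have hle : l ≤ i.pred hi0 := by
        rw [Fin.le_def]
        have := Fin.lt_def.mp hli
        simp only [Fin.coe_castSucc] at this
        simp only [Fin.coe_pred]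
        omega
      have := SimplexCategory.δ_comp_δ hle
      rwa [Fin.succ_pred] at this
  · have hne : i ≠ Fin.last _ := by
      intro h
      rw [h] at hil
      have := Fin.le_def.mp hil
      simp only [Fin.val_last, Fin.coe_castSucc] at this
      omega
    refine ⟨i.castPred hne, l.succ, ?_, ?_⟩
    · intro h
      rw [← h] at hil
      have h1 := Fin.le_def.mp hil
      simp only [Fin.coe_castSucc, Fin.val_succ] at h1
      omega
    · have hle : i.castPred hne ≤ l := by
        rw [Fin.le_def]
        have := Fin.le_def.mp hil
        simp only [Fin.coe_castSucc] at this
        simp only [Fin.coe_castPred]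
        omega
      have := (SimplexCategory.δ_comp_δ hle).symm
      rwa [Fin.castSucc_castPred] at this

end Machinery
section GenSub

open SimplexCategory

variable (X : SSet) (S : AlgKan) (w : X ⟶ S.X)

/-- The simplices of `S` generated by the image of `w` under the simplicial operators
and the chosen horn fillers. -/
inductive Gen : ∀ ⦃Δ : SimplexCategoryᵒᵖ⦄, S.X.obj Δ → Prop
  /-- base simplices -/
  | base ⦃Δ : SimplexCategoryᵒᵖ⦄ (ξ : X.obj Δ) : Gen (w.app Δ ξ)
  /-- images under simplicial operators -/
  | map ⦃Δ Δ' : SimplexCategoryᵒᵖ⦄ (f : Δ ⟶ Δ') (x : S.X.obj Δ) :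
      Gen x → Gen (S.X.map f x)
  /-- chosen fillers -/
  | fill {k : ℕ} (i : Fin (k + 2)) (h : (Λ[k + 1, i] : SSet) ⟶ S.X) :
      (∀ ⦃Δ : SimplexCategoryᵒᵖ⦄ (s : (Λ[k + 1, i] : SSet).obj Δ), Gen (h.app Δ s)) →
      Gen (S.fill i h)

/-- The subcomplex of generated simplices. -/
def genSub : SSet where
  obj Δ := { x : S.X.obj Δ // Gen X S w x }
  map f := ↾fun x => ⟨S.X.map f x.1, Gen.map f x.1 x.2⟩
  map_id Δ := by ext x; exact S.X.map_id_apply Δ x.1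
  map_comp f g := by ext x; exact S.X.map_comp_apply f g x.1

/-- Inclusion of the generated subcomplex. -/
def genIncl : genSub X S w ⟶ S.X where
  app Δ := ↾fun x => x.1

/-- The generated subcomplex as an algebraic Kan complex. -/
def genAlg : AlgKan where
  X := genSub X S w
  fill i h := ⟨S.fill i (h ≫ genIncl X S w), Gen.fill i _ (fun Δ s => (h.app Δ s).2)⟩
  fill_spec i h j hj := Subtype.ext (S.fill_spec i (h ≫ genIncl X S w) j hj)

/-- Inclusion as a morphism of algebraic Kan complexes. -/
def genInclHom : AlgKanHom (genAlg X S w) S where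
  map := genIncl X S w
  fill_comm i h := rfl

lemma thin_genAlg {m : ℕ} {y : (genAlg X S w).X _⦋m + 1⦌} (hy : Thin (genAlg X S w) y) :
    Thin S y.1 := by
  induction hy with
  | degen x hx =>
      obtain ⟨i, z, hz⟩ := hx
      exact Thin.degen _ ⟨i, z.1, congrArg Subtype.val hz⟩
  | filler i h => exact Thin.filler i (h ≫ genIncl X S w)
  | comp i h hf ih => exact Thin.comp i (h ≫ genIncl X S w) ih

lemma noDistinct_genAlg (hS : NoDistinctCoThin S) : NoDistinctCoThin (genAlg X S w) := by
  intro m x y hxy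
  obtain ⟨hx, hy, i, hfaces⟩ := hxy
  refine Subtype.ext (hS m x.1 y.1 ⟨thin_genAlg X S w hx, thin_genAlg X S w hy, i, ?_⟩)
  intro j hj
  exact congrArg Subtype.val (hfaces j hj)

/-- The corestriction of `w` to the generated subcomplex. -/
def toGen : X ⟶ (genAlg X S w).X where
  app Δ := ↾fun ξ => ⟨w.app Δ ξ, Gen.base ξ⟩
  naturality Δ Δ' f := by
    ext ξ
    exact Subtype.ext (by exact NatTrans.naturality_apply w f ξ)

end GenSub
section GenAll

lemma gen_all (X : SSet) (K : AlgKan) (u : X ⟶ K.X)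
    (hfree : ∀ (L : AlgKan) (f : X ⟶ L.X), ∃! g : AlgKanHom K L, u ≫ g.map = f)
    (S : AlgKan) (η : AlgKanHom K S) (hS : NoDistinctCoThin S)
    (hinit : ∀ (Z : AlgKan) (g : AlgKanHom K Z), NoDistinctCoThin Z →
      ∃! g' : AlgKanHom S Z, AlgKanHom.comp η g' = g) :
    ∀ ⦃Δ : SimplexCategoryᵒᵖ⦄ (x : S.X.obj Δ), Gen X S (u ≫ η.map) x := by
  set w := u ≫ η.map with hw
  obtain ⟨g, hg, -⟩ := hfree (genAlg X S w) (toGen X S w)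
  have h1 : AlgKanHom.comp g (genInclHom X S w) = η := by
    obtain ⟨g₀, hg₀, hguniq⟩ := hfree S w
    have ha : u ≫ (AlgKanHom.comp g (genInclHom X S w)).map = w := by
      show u ≫ g.map ≫ (genInclHom X S w).map = w
      rw [← Category.assoc, hg]
      rfl
    rw [hguniq _ ha, hguniq η rfl]
  obtain ⟨g', hg', -⟩ := hinit (genAlg X S w) g (noDistinct_genAlg X S w hS)
  have h2 : AlgKanHom.comp g' (genInclHom X S w) = AlgKanHom.id S := by
    obtain ⟨e, he, heuniq⟩ := hinit S η hS
    have ha : AlgKanHom.comp η (AlgKanHom.comp g' (genInclHom X S w)) = η := by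
      apply AlgKanHom.ext'
      show η.map ≫ g'.map ≫ (genInclHom X S w).map = η.map
      rw [← Category.assoc]
      have hmap : η.map ≫ g'.map = g.map := congrArg AlgKanHom.map hg'
      rw [hmap]
      exact congrArg AlgKanHom.map h1
    have hb : AlgKanHom.comp η (AlgKanHom.id S) = η :=
      AlgKanHom.ext' (Category.comp_id _)
    rw [heuniq _ ha, heuniq _ hb]
  intro Δ x
  have hmap2 : g'.map ≫ genIncl X S w = 𝟙 S.X := congrArg AlgKanHom.map h2
  have hx : (g'.map ≫ genIncl X S w).app Δ x = x := by rw [hmap2]; rfl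
  rw [← hx]
  exact (g'.map.app Δ x).2

end GenAll
section FaceThin

open SimplexCategory

lemma thin_map_of_not_injective (S : AlgKan) {m : ℕ} {Δ' : SimplexCategory}
    (θ : (⦋m + 1⦌ : SimplexCategory) ⟶ Δ') (hθ : ¬ Function.Injective θ.toOrderHom)
    (x : S.X.obj (op Δ')) : Thin S (S.X.map θ.op x) := by
  obtain ⟨a, θ', hθ'⟩ := SimplexCategory.eq_σ_comp_of_not_injective θ hθ
  refine Thin.degen _ ⟨a, S.X.map θ'.op x, ?_⟩
  show S.X.map (SimplexCategory.σ a).op (S.X.map θ'.op x) = _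
  rw [← FunctorToTypes.map_comp_apply, ← op_comp, ← hθ']

/-- All images of a simplex under simplicial operators landing in dimension `> n`
are thin. -/
def FaceThin (n : ℕ) (S : AlgKan) ⦃Δ : SimplexCategoryᵒᵖ⦄ (x : S.X.obj Δ) : Prop :=
  ∀ (m : ℕ), n ≤ m → ∀ φ : (⦋m + 1⦌ : SimplexCategory) ⟶ Δ.unop,
    Thin S (S.X.map φ.op x)

lemma faceThin_of_gen (n : ℕ) (X : SSet)
    (hskel : ∀ (m : ℕ), n ≤ m → ∀ x : X _⦋m + 1⦌, IsDegenerate X x)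
    (S : AlgKan) (w : X ⟶ S.X) :
    ∀ ⦃Δ : SimplexCategoryᵒᵖ⦄ (x : S.X.obj Δ), Gen X S w x → FaceThin n S x := by
  intro Δ x hx
  induction hx with
  | base ξ =>
      intro m hm φ
      have hnat : S.X.map φ.op (w.app _ ξ) = w.app _ (X.map φ.op ξ) :=
        (NatTrans.naturality_apply w φ.op ξ).symm
      rw [hnat]
      obtain ⟨a, z, hz⟩ := hskel m hm (X.map φ.op ξ)
      refine Thin.degen _ ⟨a, w.app _ z, ?_⟩
      show S.X.map (SimplexCategory.σ a).op (w.app _ z) = _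
      rw [← NatTrans.naturality_apply w (SimplexCategory.σ a).op z]
      show w.app _ (X.σ a z) = _
      rw [hz]
  | map f x hx ih =>
      intro m hm φ
      have heq : S.X.map φ.op (S.X.map f x) = S.X.map (φ ≫ f.unop).op x := by
        rw [op_comp, Quiver.Hom.op_unop, FunctorToTypes.map_comp_apply]
      rw [heq]
      exact ih m hm (φ ≫ f.unop)
  | @fill k i h hGen ih =>
      intro m hm φ
      by_cases hinj : Function.Injective φ.toOrderHom
      · have hmono : Mono φ := SimplexCategory.mono_iff_injective.mpr hinj
        have hle : m + 1 ≤ k + 1 := by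
          simpa using @SimplexCategory.len_le_of_mono _ _ φ hmono
        rcases eq_or_lt_of_le hle with hlen | hlen
        · -- φ is an isomorphism, hence the identity
          have hk : k = m := by omega
          subst hk
          have hid : φ = 𝟙 _ := @SimplexCategory.eq_id_of_mono _ φ hmono
          rw [hid, op_id, FunctorToTypes.map_id_apply]
          exact Thin.filler i h
        · -- φ factors through a face map
          have hns : ¬ Function.Surjective φ.toOrderHom := by
            intro hs
            have : k + 1 ≤ m + 1 := by
              simpa using @SimplexCategory.len_le_of_epi _ _ φ
                (SimplexCategory.epi_iff_surjective.mpr hs)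
            omega
          obtain ⟨b, θ', hφ⟩ := SimplexCategory.eq_comp_δ_of_not_surjective φ hns
          rcases eq_or_ne b i with rfl | hbi
          · -- the factoring face is the horn's missing face
            have hθinj : Function.Injective θ'.toOrderHom := by
              intro a₁ a₂ ha
              apply hinj
              rw [hφ]
              show (SimplexCategory.δ b).toOrderHom (θ'.toOrderHom a₁) = _
              rw [ha]
              rfl
            have hθmono : Mono θ' := SimplexCategory.mono_iff_injective.mpr hθinj
            have hle2 : m + 1 ≤ k := by
              simpa using @SimplexCategory.len_le_of_mono _ _ θ' hθmono
            rcases eq_or_lt_of_le hle2 with h2 | h2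
            · -- θ' is the identity: use the Thin.comp rule
              have hk : k = m + 1 := h2.symm
              subst hk
              have hθid : θ' = 𝟙 _ := @SimplexCategory.eq_id_of_mono _ θ' hθmono
              rw [hφ, hθid, Category.id_comp]
              show Thin S (S.X.δ b (S.fill b h))
              refine Thin.comp b h ?_
              intro j hj
              rw [S.fill_spec b h j hj]
              have := ih (horn.face b j hj) m hm (𝟙 _)
              rwa [op_id, FunctorToTypes.map_id_apply] at this
            · -- θ' factors through another face map; swap the two faces
              obtain ⟨c, rfl⟩ : ∃ c, k = c + 1 := ⟨k - 1, by omega⟩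
              have hθns : ¬ Function.Surjective θ'.toOrderHom := by
                intro hs
                have : c + 1 + 1 ≤ m + 1 + 1 := by
                  simpa using @SimplexCategory.len_le_of_epi _ _ θ'
                    (SimplexCategory.epi_iff_surjective.mpr hs)
                omega
              obtain ⟨l, θ'', hθ''⟩ := SimplexCategory.eq_comp_δ_of_not_surjective θ' hθns
              obtain ⟨a, b', hb'i, hswap⟩ := delta_swap c l b
              have hfactor : φ = (θ'' ≫ SimplexCategory.δ a) ≫ SimplexCategory.δ b' := by
                rw [hφ, hθ'', Category.assoc, Category.assoc, hswap]
              rw [hfactor, op_comp, FunctorToTypes.map_comp_apply]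
              have hface : S.X.map (SimplexCategory.δ b').op (S.fill b h)
                  = h.app _ (horn.face b b' hb'i) := S.fill_spec b h b' hb'i
              rw [hface]
              exact ih (horn.face b b' hb'i) m hm (θ'' ≫ SimplexCategory.δ a)
          · -- the factoring face is a face of the horn
            rw [hφ, op_comp, FunctorToTypes.map_comp_apply]
            have hface : S.X.map (SimplexCategory.δ b).op (S.fill i h)
                = h.app _ (horn.face i b hbi) := S.fill_spec i h b hbi
            rw [hface]
            exact ih (horn.face i b hbi) m hm θ'
      · exact thin_map_of_not_injective S φ hinj _

end FaceThin
section Boundary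

open SimplexCategory

lemma all_thin (n : ℕ) (X : SSet)
    (hskel : ∀ (m : ℕ), n ≤ m → ∀ x : X _⦋m + 1⦌, IsDegenerate X x)
    (K : AlgKan) (u : X ⟶ K.X)
    (hfree : ∀ (L : AlgKan) (f : X ⟶ L.X), ∃! g : AlgKanHom K L, u ≫ g.map = f)
    (S : AlgKan) (η : AlgKanHom K S) (hS : NoDistinctCoThin S)
    (hinit : ∀ (Z : AlgKan) (g : AlgKanHom K Z), NoDistinctCoThin Z →
      ∃! g' : AlgKanHom S Z, AlgKanHom.comp η g' = g) :
    ∀ (p : ℕ), n ≤ p → ∀ x : S.X _⦋p + 1⦌, Thin S x := by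
  intro p hp x
  have h := faceThin_of_gen n X hskel S (u ≫ η.map) x
    (gen_all X K u hfree S η hS hinit x) p hp (𝟙 _)
  rwa [op_id, FunctorToTypes.map_id_apply] at h

/-- The inclusion of a horn into the boundary. -/
def hornToBoundary (N : ℕ) (i : Fin (N + 1)) : (Λ[N, i] : SSet) ⟶ (∂Δ[N] : SSet) where
  app Δ := ↾fun α => ⟨α.1, by
    intro hsurj
    apply α.2
    rw [Set.eq_univ_iff_forall]
    exact fun j => Or.inl (hsurj j)⟩
  naturality Δ Δ' f := by ext α; exact Subtype.ext rfl

/-- The `j`-th face of the boundary of the standard simplex. -/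
def bFace (N : ℕ) (j : Fin (N + 2)) : (∂Δ[N + 1] : SSet) _⦋N⦌ :=
  ⟨stdSimplex.objEquiv.symm (SimplexCategory.δ j), by
    intro hsurj
    obtain ⟨a, ha⟩ := hsurj j
    exact Fin.succAbove_ne j a ha⟩

lemma hornToBoundary_face {N : ℕ} (i j : Fin (N + 2)) (hj : j ≠ i) :
    (hornToBoundary (N + 1) i).app (op ⦋N⦌) (horn.face i j hj) = bFace N j :=
  Subtype.ext rfl

end Boundary
theorem strictification_of_skeletal_is_coskeletal' (n : ℕ) (X : SSet)
    (hskel : ∀ (m : ℕ), n ≤ m → ∀ x : X _⦋m + 1⦌, IsDegenerate X x)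
    (K : AlgKan) (u : X ⟶ K.X)
    (hfree : ∀ (L : AlgKan) (f : X ⟶ L.X), ∃! g : AlgKanHom K L, u ≫ g.map = f)
    (S : AlgKan) (η : AlgKanHom K S) (hS : NoDistinctCoThin S)
    (hinit : ∀ (Z : AlgKan) (g : AlgKanHom K Z), NoDistinctCoThin Z →
      ∃! g' : AlgKanHom S Z, AlgKanHom.comp η g' = g) :
    ∀ (N : ℕ), n + 2 ≤ N → ∀ b : (∂Δ[N] : SSet) ⟶ S.X,
      ∃! e : Δ[N] ⟶ S.X, (∂Δ[N]).ι ≫ e = b := by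
  intro N hN b
  obtain ⟨m, hm, rfl⟩ : ∃ m, n ≤ m ∧ N = m + 2 := ⟨N - 2, by omega, by omega⟩
  have thin_all := all_thin n X hskel K u hfree S η hS hinit
  -- the horn obtained by restricting `b` to the 0-horn
  set h : (Λ[m + 2, (0 : Fin (m + 3))] : SSet) ⟶ S.X := hornToBoundary (m + 2) 0 ≫ b with hh
  set y : S.X _⦋m + 2⦌ := S.fill 0 h with hy
  set xf : ∀ _ : Fin (m + 3), S.X _⦋m + 1⦌ :=
    fun j => b.app (op ⦋m + 1⦌) (bFace (m + 1) j) with hxf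
  have hface : ∀ (j : Fin (m + 3)) (_ : j ≠ 0), S.X.δ j y = xf j := by
    intro j hj
    rw [hy, S.fill_spec 0 h j hj, hh]
    show b.app _ ((hornToBoundary (m + 2) 0).app _ (horn.face 0 j hj)) = _
    rw [hornToBoundary_face]
  -- the remaining face also matches, by uniqueness of co-thin simplices
  have hface0 : S.X.δ (0 : Fin (m + 3)) y = xf 0 := by
    apply hS m
    refine ⟨thin_all m hm _, thin_all m hm _, 0, ?_⟩
    intro j hj
    have hsw : (SimplexCategory.δ j ≫ SimplexCategory.δ (0 : Fin (m + 3)) :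
        (⦋m⦌ : SimplexCategory) ⟶ ⦋m + 2⦌)
        = SimplexCategory.δ (0 : Fin (m + 2)) ≫ SimplexCategory.δ j.succ := by
      have h0 := SimplexCategory.δ_comp_δ (Fin.zero_le j)
      rw [Fin.castSucc_zero] at h0
      exact h0.symm
    have hl : S.X.δ j (S.X.δ (0 : Fin (m + 3)) y)
        = S.X.δ (0 : Fin (m + 2)) (xf j.succ) := by
      show S.X.map (SimplexCategory.δ j).op
          (S.X.map (SimplexCategory.δ (0 : Fin (m + 3))).op y) = _
      rw [← FunctorToTypes.map_comp_apply, ← op_comp, hsw, op_comp,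
        FunctorToTypes.map_comp_apply]
      show S.X.δ (0 : Fin (m + 2)) (S.X.δ j.succ y) = _
      rw [hface j.succ (Fin.succ_ne_zero j)]
    have hr : S.X.δ j (xf 0) = S.X.δ (0 : Fin (m + 2)) (xf j.succ) := by
      show S.X.map (SimplexCategory.δ j).op (b.app (op ⦋m + 1⦌) (bFace (m + 1) 0))
          = S.X.map (SimplexCategory.δ (0 : Fin (m + 2))).op
            (b.app (op ⦋m + 1⦌) (bFace (m + 1) j.succ))
      rw [← FunctorToTypes.naturality, ← FunctorToTypes.naturality]
      refine congrArg (b.app (op ⦋m⦌)) (Subtype.ext ?_)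
      show Δ[m + 2].map (SimplexCategory.δ j).op
            ((stdSimplex.objEquiv (n := ⦋m + 2⦌) (m := op ⦋m + 1⦌)).symm
              (SimplexCategory.δ (0 : Fin (m + 3))))
          = Δ[m + 2].map (SimplexCategory.δ (0 : Fin (m + 2))).op
            ((stdSimplex.objEquiv (n := ⦋m + 2⦌) (m := op ⦋m + 1⦌)).symm (SimplexCategory.δ j.succ))
      rw [stdSimplex.map_apply, stdSimplex.map_apply,
        Quiver.Hom.unop_op, Quiver.Hom.unop_op, Equiv.apply_symm_apply,
        Equiv.apply_symm_apply]
      exact congrArg (stdSimplex.objEquiv (n := ⦋m + 2⦌) (m := op ⦋m⦌)).symm hsw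
    rw [hl, hr]
  have hfaceAll : ∀ j : Fin (m + 3), S.X.map (SimplexCategory.δ j).op y = xf j := by
    intro j
    by_cases hj : j = 0
    · subst hj; exact hface0
    · exact hface j hj
  set e : Δ[m + 2] ⟶ S.X := (yonedaEquiv (X := S.X) (n := ⦋m + 2⦌)).symm y with he
  have happ : ∀ (Δ : SimplexCategoryᵒᵖ) (x : Δ[m + 2].obj Δ),
      e.app Δ x = S.X.map (stdSimplex.objEquiv x).op y := fun Δ x => rfl
  have hbd : (∂Δ[m + 2]).ι ≫ e = b := by
    apply NatTrans.ext
    funext Δ; ext α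
    obtain ⟨j, ψ', hψ⟩ :=
      SimplexCategory.eq_comp_δ_of_not_surjective (stdSimplex.objEquiv α.1) α.2
    show e.app Δ α.1 = b.app Δ α
    rw [happ Δ α.1, hψ, op_comp, FunctorToTypes.map_comp_apply, hfaceAll j, hxf]
    rw [← FunctorToTypes.naturality]
    show b.app Δ ((∂Δ[m + 2] : SSet).map ψ'.op (bFace (m + 1) j)) = b.app Δ α
    refine congrArg (b.app Δ) (Subtype.ext ?_)
    show Δ[m + 2].map ψ'.op
        ((stdSimplex.objEquiv (n := ⦋m + 2⦌) (m := op ⦋m + 1⦌)).symm (SimplexCategory.δ j)) = α.1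
    rw [stdSimplex.map_apply, Quiver.Hom.unop_op, Equiv.apply_symm_apply, ← hψ,
      Equiv.symm_apply_apply]
  refine ⟨e, hbd, ?_⟩
  intro e' he'
  set y' : S.X _⦋m + 2⦌ := yonedaEquiv (X := S.X) (n := ⦋m + 2⦌) e' with hy'
  have hy'face : ∀ j : Fin (m + 3), S.X.map (SimplexCategory.δ j).op y' = xf j := by
    intro j
    have h1 : y' = e'.app (op ⦋m + 2⦌) (stdSimplex.objEquiv.symm (𝟙 _)) := rfl
    have h2 : S.X.map (SimplexCategory.δ j).op y'
        = e'.app (op ⦋m + 1⦌) (Δ[m + 2].map (SimplexCategory.δ j).op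
            (stdSimplex.objEquiv.symm (𝟙 _))) := by
      rw [h1, ← FunctorToTypes.naturality]
    have h3 : Δ[m + 2].map (SimplexCategory.δ j).op
        (stdSimplex.objEquiv.symm (𝟙 _)) = (bFace (m + 1) j).1 := by
      rw [stdSimplex.map_apply, Quiver.Hom.unop_op, Equiv.apply_symm_apply,
        Category.comp_id]
      rfl
    rw [h2, h3]
    show ((∂Δ[m + 2]).ι ≫ e').app (op ⦋m + 1⦌) (bFace (m + 1) j) = xf j
    rw [he', hxf]
  have hyy : y' = y := by
    apply hS (m + 1)
    refine ⟨thin_all (m + 1) (by omega) _, thin_all (m + 1) (by omega) _, 0, ?_⟩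
    intro j hj
    show S.X.map (SimplexCategory.δ j).op y' = S.X.map (SimplexCategory.δ j).op y
    rw [hy'face j, hfaceAll j]
  have hide : (yonedaEquiv (X := S.X) (n := ⦋m + 2⦌)).symm y' = e' := Equiv.symm_apply_apply _ _
  rw [← hide, hyy]


/-- if `X` is an `n`-skeletal simplicial set (every simplex of dimension
`> n` is degenerate), then its strictification `St(X)` — the strictification `St_Alg`
of the free algebraic Kan complex on `X`, here characterized by its universal
properties — is `(n+1)`-coskeletal: every sphere `∂Δᴺ → St(X)` with `N ≥ n+2` extends
uniquely to `Δᴺ`. -/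
theorem strictification_of_skeletal_is_coskeletal (n : ℕ) (X : SSet)
    (hskel : ∀ (m : ℕ), n ≤ m → ∀ x : X _⦋m + 1⦌, IsDegenerate X x)
    -- the free algebraic Kan complex on X
    (K : AlgKan) (u : X ⟶ K.X)
    (hfree : ∀ (L : AlgKan) (f : X ⟶ L.X), ∃! g : AlgKanHom K L, u ≫ g.map = f)
    -- its strictification
    (S : AlgKan) (η : AlgKanHom K S) (hS : NoDistinctCoThin S)
    (hinit : ∀ (Z : AlgKan) (g : AlgKanHom K Z), NoDistinctCoThin Z →
      ∃! g' : AlgKanHom S Z, AlgKanHom.comp η g' = g) :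
    ∀ (N : ℕ), n + 2 ≤ N → ∀ b : (∂Δ[N] : SSet) ⟶ S.X,
      ∃! e : Δ[N] ⟶ S.X, (∂Δ[N]).ι ≫ e = b := by
  exact strictification_of_skeletal_is_coskeletal' n X hskel K u hfree S η hS hinit

end Strict
end

section
/- If X is an n-skeletal simplicial set, then the free simplicial abelian group ℤ[X] is (n+1)-coskeletal. -/
open CategoryTheory Simplicial SSet Opposite

namespace Strict


/-- The free simplicial abelian group functor `X ↦ ℤ[X]`. -/
def ZSSet : SSet ⥤ SimplicialObject AddCommGrpCat :=
  (SimplicialObject.whiskering _ _).obj AddCommGrpCat.free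

universe u

/-- The free abelian group on the `m`-simplices. -/
abbrev FG (X : SSet.{u}) (m : ℕ) : Type u := FreeAbelianGroup (X _⦋m⦌)

/-- The `i`-th face map of `ℤ[X]`, as an additive homomorphism. -/
def dmap (X : SSet.{u}) {m : ℕ} (i : Fin (m + 2)) : FG X (m + 1) →+ FG X m :=
  FreeAbelianGroup.map (X.δ i)

/-- The `i`-th degeneracy map of `ℤ[X]`, as an additive homomorphism. -/
def smap (X : SSet.{u}) {m : ℕ} (i : Fin (m + 1)) : FG X m →+ FG X (m + 1) :=
  FreeAbelianGroup.map (X.σ i)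

theorem map_map {α β γ : Type u} (f : α → β) (g : β → γ) (x : FreeAbelianGroup α) :
    FreeAbelianGroup.map g (FreeAbelianGroup.map f x) = FreeAbelianGroup.map (g ∘ f) x :=
  (FreeAbelianGroup.map_comp_apply x).symm

variable {X : SSet.{u}}

theorem dd_eq {m a b : ℕ} (hab : a ≤ b) (hb : b ≤ m + 1) (z : FG X (m + 2)) :
    dmap X ⟨a, by omega⟩ (dmap X ⟨b + 1, by omega⟩ z)
      = dmap X ⟨b, by omega⟩ (dmap X ⟨a, by omega⟩ z) := by
  have h := X.δ_comp_δ (n := m) (i := ⟨a, by omega⟩) (j := ⟨b, by omega⟩)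
    (Fin.mk_le_mk.mpr hab)
  simp only [dmap, map_map]
  refine congrArg (fun f => FreeAbelianGroup.map f z) (funext fun x => ?_)
  have h' := ConcreteCategory.congr_hom h x
  simp only [CategoryTheory.comp_apply] at h'
  exact h'

theorem ds_lt {m a b : ℕ} (hab : a < b) (hb : b ≤ m + 1) (y : FG X (m + 1)) :
    dmap X ⟨a, by omega⟩ (smap X ⟨b, by omega⟩ y)
      = smap X ⟨b - 1, by omega⟩ (dmap X ⟨a, by omega⟩ y) := by
  have hb1 : (⟨b - 1, by omega⟩ : Fin (m + 1)).succ = ⟨b, by omega⟩ := by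
    apply Fin.ext; simp; omega
  have h := X.δ_comp_σ_of_le (n := m) (i := ⟨a, by omega⟩) (j := ⟨b - 1, by omega⟩)
    (by rw [Fin.le_def]; simpa using by omega)
  rw [hb1] at h
  simp only [dmap, smap, map_map]
  refine congrArg (fun f => FreeAbelianGroup.map f y) (funext fun x => ?_)
  have h' := ConcreteCategory.congr_hom h x
  simp only [CategoryTheory.comp_apply] at h'
  exact h'

theorem ds_self {m a : ℕ} (ha : a ≤ m) (y : FG X m) :
    dmap X ⟨a, by omega⟩ (smap X ⟨a, by omega⟩ y) = y := by
  have h := X.δ_comp_σ_self' (n := m) (j := ⟨a, by omega⟩) (i := ⟨a, by omega⟩)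
    (Fin.ext (by simp))
  simp only [dmap, smap, map_map]
  refine (congrArg (fun f => FreeAbelianGroup.map f y) (funext fun x => ?_)).trans (FreeAbelianGroup.map_id_apply y)
  have h' := ConcreteCategory.congr_hom h x
  simp only [CategoryTheory.comp_apply, CategoryTheory.id_apply] at h'
  exact h'

theorem ss_eq {m a b : ℕ} (hab : a ≤ b) (hb : b ≤ m) (z : FG X m) :
    smap X ⟨a, by omega⟩ (smap X ⟨b, by omega⟩ z)
      = smap X ⟨b + 1, by omega⟩ (smap X ⟨a, by omega⟩ z) := by
  have h := X.σ_comp_σ (n := m) (i := ⟨a, by omega⟩) (j := ⟨b, by omega⟩)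
    (Fin.mk_le_mk.mpr hab)
  simp only [smap, map_map]
  refine congrArg (fun f => FreeAbelianGroup.map f z) (funext fun x => ?_)
  have h' := ConcreteCategory.congr_hom h x
  simp only [CategoryTheory.comp_apply] at h'
  exact h'

/-- The subgroup generated by the images of the degeneracies `σ_j` with `j ≥ k`. -/
def Tsub (X : SSet.{u}) (m k : ℕ) : AddSubgroup (FG X (m + 1)) :=
  AddSubgroup.closure {x | ∃ j : Fin (m + 1), k ≤ (j : ℕ) ∧ ∃ y : FG X m, smap X j y = x}

theorem gen_mem {m k : ℕ} (hk : k ≤ m) (j : Fin (m + 1)) (hkj : k ≤ (j : ℕ)) (y : FG X m) :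
    smap X j y - smap X ⟨k, by omega⟩ (dmap X ⟨k, by omega⟩ (smap X j y))
      ∈ Tsub X m (k + 1) := by
  obtain ⟨jv, hjv⟩ := j
  rcases Nat.eq_or_lt_of_le hkj with heq | hlt
  · have hj : (⟨jv, hjv⟩ : Fin (m + 1)) = ⟨k, by omega⟩ := Fin.ext (show jv = k from heq.symm)
    rw [hj, ds_self hk, sub_self]
    exact zero_mem _
  · have hlt' : k < jv := hlt
    obtain ⟨m', rfl⟩ : ∃ m', m = m' + 1 := ⟨m - 1, by omega⟩
    rw [ds_lt (a := k) (b := jv) hlt' (by omega) y]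
    rw [ss_eq (a := k) (b := jv - 1) (by omega) (by omega)]
    have hj1 : (⟨jv - 1 + 1, by omega⟩ : Fin (m' + 2)) = ⟨jv, hjv⟩ :=
      Fin.ext (show jv - 1 + 1 = jv by omega)
    rw [hj1, ← map_sub]
    exact AddSubgroup.subset_closure ⟨⟨jv, hjv⟩, show k + 1 ≤ jv by omega, _, rfl⟩

/-- Key vanishing lemma: in degrees `> n`, an element of `ℤ[X]` all of whose faces
(except possibly the last) vanish is zero, provided `X` is `n`-skeletal. -/
theorem vanish {n : ℕ} (hskel : ∀ (m : ℕ), n ≤ m → ∀ x : X _⦋m + 1⦌, IsDegenerate X x)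
    {m : ℕ} (hm : n ≤ m) (z : FG X (m + 1))
    (hz : ∀ i : Fin (m + 2), (i : ℕ) ≤ m → dmap X i z = 0) : z = 0 := by
  have hT0 : z ∈ Tsub X m 0 := by
    refine FreeAbelianGroup.induction_on z (zero_mem _) (fun x => ?_)
      (fun x hx => neg_mem hx) (fun a b ha hb => add_mem ha hb)
    obtain ⟨i, y, hy⟩ := hskel m hm x
    exact AddSubgroup.subset_closure ⟨i, Nat.zero_le _, FreeAbelianGroup.of y,
      by rw [smap, FreeAbelianGroup.map_of_apply, hy]⟩
  have step : ∀ (k : ℕ) (hk : k ≤ m), ∀ x ∈ Tsub X m k,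
      x - smap X ⟨k, by omega⟩ (dmap X ⟨k, by omega⟩ x) ∈ Tsub X m (k + 1) := by
    intro k hk x hx
    induction hx using AddSubgroup.closure_induction with
    | mem x hxmem =>
      obtain ⟨j, hkj, y, rfl⟩ := hxmem
      exact gen_mem hk j hkj y
    | zero => simp only [map_zero, sub_zero]; exact zero_mem _
    | add x y hx hy px py =>
      have := add_mem px py
      rwa [sub_add_sub_comm, ← map_add, ← map_add] at this
    | neg x hx px =>
      have h' := neg_mem px
      rwa [show -(x - smap X ⟨k, by omega⟩ (dmap X ⟨k, by omega⟩ x))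
        = -x - smap X ⟨k, by omega⟩ (dmap X ⟨k, by omega⟩ (-x)) by
          simp only [map_neg]; abel] at h'
  have main : ∀ d k : ℕ, k + d = m + 1 → z ∈ Tsub X m k → z = 0 := by
    intro d
    induction d with
    | zero =>
      intro k hk hzk
      have hle : Tsub X m k ≤ ⊥ := by
        rw [Tsub, AddSubgroup.closure_le]
        rintro x ⟨j, hj, -⟩
        exact absurd hj (by omega)
      simpa using hle hzk
    | succ d ih =>
      intro k hk hzk
      have h0 : dmap X ⟨k, by omega⟩ z = 0 := hz ⟨k, by omega⟩ (show k ≤ m by omega)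
      have := step k (by omega) z hzk
      rw [h0, map_zero, sub_zero] at this
      exact ih (k + 1) (by omega) this
  exact main (m + 1) 0 (by omega) hT0

/-- Filling a compatible family of all-but-the-last faces. -/
theorem filler {m : ℕ} (y : Fin (m + 3) → FG X (m + 1))
    (compat : ∀ (i j : Fin (m + 3)) (hij : (i : ℕ) < (j : ℕ)),
      dmap X ⟨(i : ℕ), by have := j.isLt; omega⟩ (y j)
        = dmap X ⟨(j : ℕ) - 1, by have := j.isLt; omega⟩ (y i)) :
    ∃ w : FG X (m + 2), ∀ i : Fin (m + 3), (i : ℕ) ≤ m + 1 → dmap X i w = y i := by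
  suffices h : ∀ k : ℕ, k ≤ m + 1 → ∃ w : FG X (m + 2),
      ∀ i : Fin (m + 3), (i : ℕ) ≤ k → dmap X i w = y i by
    obtain ⟨w, hw⟩ := h (m + 1) le_rfl
    exact ⟨w, hw⟩
  intro k
  induction k with
  | zero =>
    intro _
    refine ⟨smap X ⟨0, by omega⟩ (y ⟨0, by omega⟩), fun i hi => ?_⟩
    have h0 : i = ⟨0, by omega⟩ := Fin.ext (Nat.le_zero.mp hi)
    rw [h0]
    exact ds_self (by omega) _
  | succ k ih =>
    intro hk1
    obtain ⟨w, hw⟩ := ih (by omega)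
    set c := dmap X ⟨k + 1, by omega⟩ w - y ⟨k + 1, by omega⟩ with hc
    refine ⟨w - smap X ⟨k + 1, by omega⟩ c, fun i hi => ?_⟩
    obtain ⟨iv, hivlt⟩ := i
    have hi' : iv ≤ k + 1 := hi
    rw [map_sub]
    rcases (by omega : iv ≤ k ∨ iv = k + 1) with hle | heq
    · rw [ds_lt (a := iv) (b := k + 1) (by omega) (by omega) c]
      have hcz : dmap X ⟨iv, by omega⟩ c = 0 := by
        rw [hc, map_sub, dd_eq (a := iv) (b := k) hle (by omega) w,
          hw ⟨iv, by omega⟩ (show iv ≤ k from hle),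
          compat ⟨iv, by omega⟩ ⟨k + 1, by omega⟩ (show iv < k + 1 by omega)]
        exact sub_self _
      rw [hcz, map_zero, sub_zero]
      exact hw ⟨iv, hivlt⟩ (show iv ≤ k from hle)
    · subst heq
      rw [ds_self (a := k + 1) (by omega) c, hc]
      exact sub_sub_cancel _ _

/-- The `i`-th face of the boundary of the standard simplex. -/
def bdryFace (m : ℕ) (i : Fin (m + 3)) : (∂Δ[m + 2] : SSet) _⦋m + 1⦌ :=
  ⟨(stdSimplex.objEquiv).symm (SimplexCategory.δ i), fun hsurj => by
    obtain ⟨k, hk⟩ := hsurj i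
    exact Fin.succAbove_ne i k hk⟩

/-- The morphism `Δ[N] ⟶ ℤ[X]` determined by an `N`-simplex `w` of `ℤ[X]`. -/
def extMap (X : SSet.{u}) (N : ℕ) (w : FG X N) : Δ[N] ⟶ toSSet.obj (ZSSet.obj X) where
  app k := TypeCat.ofHom fun g => FreeAbelianGroup.map (X.map ((stdSimplex.objEquiv) g).op) w
  naturality k l f := by
    ext g
    have h1 : (stdSimplex.objEquiv) (Δ[N].map f g)
        = f.unop ≫ (stdSimplex.objEquiv) g := by
      rw [stdSimplex.map_apply]; exact Equiv.apply_symm_apply _ _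
    show FreeAbelianGroup.map (X.map ((stdSimplex.objEquiv) (Δ[N].map f g)).op) w
      = FreeAbelianGroup.map (X.map f) (FreeAbelianGroup.map
          (X.map ((stdSimplex.objEquiv) g).op) w)
    rw [h1, map_map, op_comp, X.map_comp]
    rfl

theorem hom_eq_extMap (N : ℕ) (e : Δ[N] ⟶ toSSet.obj (ZSSet.obj X)) :
    e = extMap X N (e.app (op ⦋N⦌) ((stdSimplex.objEquiv.symm (𝟙 _) : Δ[N] _⦋N⦌))) := by
  apply NatTrans.ext
  funext k
  ext g
  have h2 : Δ[N].map ((stdSimplex.objEquiv g).op) ((stdSimplex.objEquiv.symm (𝟙 _) : Δ[N] _⦋N⦌)) = g := by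
    rw [stdSimplex.map_apply]
    rw [Equiv.apply_symm_apply]
    rw [show ((stdSimplex.objEquiv g).op).unop ≫ 𝟙 _ = (stdSimplex.objEquiv g) from Category.comp_id _]
    exact Equiv.symm_apply_apply _ _
  have hnat := NatTrans.naturality_apply e
    ((stdSimplex.objEquiv g).op) ((stdSimplex.objEquiv.symm (𝟙 _) : Δ[N] _⦋N⦌))
  rw [h2] at hnat
  exact hnat

/-- if `X` is an `n`-skeletal simplicial set (every simplex of dimension
`> n` is degenerate), then the free simplicial abelian group `ℤ[X]` is
`(n+1)`-coskeletal: every sphere `∂Δᴺ → ℤ[X]` with `N ≥ n+2` extends uniquely to `Δᴺ`. -/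
theorem free_simplicial_abelian_group_coskeletal (n : ℕ) (X : SSet)
    (hskel : ∀ (m : ℕ), n ≤ m → ∀ x : X _⦋m + 1⦌, IsDegenerate X x) :
    ∀ (N : ℕ), n + 2 ≤ N → ∀ b : (∂Δ[N] : SSet) ⟶ toSSet.obj (ZSSet.obj X),
      ∃! e : Δ[N] ⟶ toSSet.obj (ZSSet.obj X), (∂Δ[N]).ι ≫ e = b := by
  intro N hN b
  obtain ⟨m, rfl⟩ : ∃ m, N = m + 2 := ⟨N - 2, by omega⟩
  have hnm : n ≤ m := by omega
  let yb : Fin (m + 3) → FG X (m + 1) := fun i => b.app (op ⦋m + 1⦌) (bdryFace m i)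
  -- compatibility of the faces of the sphere
  have compat : ∀ (i j : Fin (m + 3)) (hij : (i : ℕ) < (j : ℕ)),
      dmap X ⟨(i : ℕ), by have := j.isLt; omega⟩ (yb j)
        = dmap X ⟨(j : ℕ) - 1, by have := j.isLt; omega⟩ (yb i) := by
    intro i j hij
    have hjlt := j.isLt
    have key : SimplexCategory.δ (⟨(i : ℕ), by omega⟩ : Fin (m + 2)) ≫ SimplexCategory.δ j
        = SimplexCategory.δ (⟨(j : ℕ) - 1, by omega⟩ : Fin (m + 2)) ≫ SimplexCategory.δ i := by
      have h := SimplexCategory.δ_comp_δ' (n := m) (i := ⟨(i : ℕ), by omega⟩) (j := j)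
        (by rw [Fin.lt_def]; exact hij)
      exact h
    have hface : (∂Δ[m + 2] : SSet).map (SimplexCategory.δ (⟨(i : ℕ), by omega⟩ : Fin (m + 2))).op
          (bdryFace m j)
        = (∂Δ[m + 2] : SSet).map (SimplexCategory.δ (⟨(j : ℕ) - 1, by omega⟩ : Fin (m + 2))).op
          (bdryFace m i) := by
      apply Subtype.ext
      show Δ[m + 2].map _ ((stdSimplex.objEquiv).symm (SimplexCategory.δ j))
        = Δ[m + 2].map _ ((stdSimplex.objEquiv).symm (SimplexCategory.δ i))
      rw [stdSimplex.map_apply, stdSimplex.map_apply,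
        Equiv.apply_symm_apply, Equiv.apply_symm_apply]
      exact congrArg _ key
    have h1 := NatTrans.naturality_apply b
      (SimplexCategory.δ (⟨(i : ℕ), by omega⟩ : Fin (m + 2))).op (bdryFace m j)
    have h2 := NatTrans.naturality_apply b
      (SimplexCategory.δ (⟨(j : ℕ) - 1, by omega⟩ : Fin (m + 2))).op (bdryFace m i)
    exact (h1.symm.trans (congrArg (b.app (op ⦋m⦌)) hface)).trans h2
  obtain ⟨w, hw⟩ := filler yb compat
  -- the last face also matches
  have hlast : dmap X ⟨m + 1 + 1, by omega⟩ w = yb ⟨m + 1 + 1, by omega⟩ := by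
    rw [← sub_eq_zero]
    apply vanish hskel hnm
    intro i hi
    obtain ⟨iv, hiv⟩ := i
    have hi' : iv ≤ m := hi
    rw [map_sub, dd_eq (a := iv) (b := m + 1) (by omega) le_rfl w,
      hw ⟨iv, by omega⟩ (show iv ≤ m + 1 by omega),
      compat ⟨iv, by omega⟩ ⟨m + 1 + 1, by omega⟩ (show iv < m + 1 + 1 by omega)]
    exact sub_self _
  have hface : ∀ i : Fin (m + 3), dmap X i w = yb i := by
    intro i
    obtain ⟨iv, hiv⟩ := i
    rcases (by omega : iv ≤ m + 1 ∨ iv = m + 2) with h | h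
    · exact hw _ h
    · subst h; exact hlast
  refine ⟨extMap X (m + 2) w, ?_, ?_⟩
  · -- restriction to the boundary is `b`
    apply NatTrans.ext
    funext k
    obtain ⟨ku⟩ := k
    induction ku using SimplexCategory.rec with
    | _ l =>
    ext g
    obtain ⟨g, hg⟩ := g
    have hex : ∃ i : Fin (m + 3), ∀ l, (stdSimplex.asOrderHom g) l ≠ i := by
      change ¬ Function.Surjective (stdSimplex.asOrderHom g) at hg
      simp only [Function.Surjective, not_forall] at hg
      obtain ⟨i, hi⟩ := hg
      exact ⟨i, fun l hl => hi ⟨l, hl⟩⟩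
    obtain ⟨i, hi⟩ := hex
    have hfct := SimplexCategory.factor_δ_spec ((stdSimplex.objEquiv) g) i hi
    have hb : (∂Δ[m + 2] : SSet).map (SimplexCategory.factor_δ ((stdSimplex.objEquiv) g) i).op
        (bdryFace m i) = ⟨g, hg⟩ := by
      apply Subtype.ext
      show Δ[m + 2].map _ ((stdSimplex.objEquiv).symm (SimplexCategory.δ i)) = g
      rw [stdSimplex.map_apply, Equiv.apply_symm_apply]
      rw [show (SimplexCategory.factor_δ ((stdSimplex.objEquiv) g) i).op.unop
        ≫ SimplexCategory.δ i = (stdSimplex.objEquiv) g from hfct]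
      exact Equiv.symm_apply_apply _ _
    have hnat := NatTrans.naturality_apply b
      (SimplexCategory.factor_δ ((stdSimplex.objEquiv) g) i).op (bdryFace m i)
    rw [hb] at hnat
    show FreeAbelianGroup.map (X.map ((stdSimplex.objEquiv) g).op) w
      = b.app (op ⦋l⦌) ⟨g, hg⟩
    rw [hnat]
    show FreeAbelianGroup.map (X.map ((stdSimplex.objEquiv) g).op) w
      = FreeAbelianGroup.map
          (X.map (SimplexCategory.factor_δ ((stdSimplex.objEquiv) g) i).op) (yb i)
    rw [← hface i]
    show FreeAbelianGroup.map (X.map ((stdSimplex.objEquiv) g).op) w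
      = FreeAbelianGroup.map
          (X.map (SimplexCategory.factor_δ ((stdSimplex.objEquiv) g) i).op)
          (FreeAbelianGroup.map (X.map (SimplexCategory.δ i).op) w)
    rw [map_map]
    refine congrArg (fun t => FreeAbelianGroup.map t w) ?_
    rw [← ConcreteCategory.coe_comp]
    rw [← X.map_comp, ← op_comp, hfct]
  · -- uniqueness
    intro e' he'
    have he'w : ∀ i : Fin (m + 3),
        dmap X i (e'.app (op ⦋m + 2⦌) ((stdSimplex.objEquiv.symm (𝟙 _) : Δ[m + 2] _⦋m + 2⦌))) = yb i := by
      intro i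
      have hd : Δ[m + 2].map (SimplexCategory.δ i).op ((stdSimplex.objEquiv.symm (𝟙 _) : Δ[m + 2] _⦋m + 2⦌))
          = (stdSimplex.objEquiv).symm (SimplexCategory.δ i) := by
        rw [stdSimplex.map_apply, Equiv.apply_symm_apply, Category.comp_id]
        rfl
      have hnat := NatTrans.naturality_apply e'
        (SimplexCategory.δ i).op ((stdSimplex.objEquiv.symm (𝟙 _) : Δ[m + 2] _⦋m + 2⦌))
      rw [hd] at hnat
      have happ := ConcreteCategory.congr_hom (NatTrans.congr_app he' (op ⦋m + 1⦌)) (bdryFace m i)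
      show (toSSet.obj (ZSSet.obj X)).map (SimplexCategory.δ i).op
        (e'.app (op ⦋m + 2⦌) ((stdSimplex.objEquiv.symm (𝟙 _) : Δ[m + 2] _⦋m + 2⦌))) = yb i
      rw [← hnat]
      exact happ
    have hsub : e'.app (op ⦋m + 2⦌) ((stdSimplex.objEquiv.symm (𝟙 _) : Δ[m + 2] _⦋m + 2⦌)) = w := by
      have hzz : (id (e'.app (op ⦋m + 2⦌) ((stdSimplex.objEquiv.symm (𝟙 _) : Δ[m + 2] _⦋m + 2⦌))) : FG X (m + 2)) - w
          = 0 := by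
        apply vanish hskel (m := m + 1) (by omega)
        intro i hi
        simp only [id_eq]
        rw [map_sub, hface i]; exact sub_eq_zero.mpr (he'w i)
      have h2 := sub_eq_zero.mp hzz
      simp only [id_eq] at h2
      exact h2
    rw [hom_eq_extMap (m + 2) e', hsub]

end Strict
end
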